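/- arXiv:math/0202219 — 5 statements merged into one kernel-verified Lean document; each statement's English description precedes it below -/
import Mathlib

section
/- For every n ≥ 1, the number of permutations of {1,...,n} that avoid the generalized pattern 12-3 and also avoid the generalized pattern 13-2 equals 2^(n-1). -/
/-- The value of the permutation at position `i` (0-indexed), or 0 if out of range. -/
def permVal {n : ℕ} (π : Equiv.Perm (Fin n)) (i : ℕ) : ℕ :=
  if h : i < n then (π ⟨i, h⟩ : ℕ) else 0

/-- Number of occurrences of the generalized pattern 12-3. -/
def occ12_3 {n : ℕ} (π : Equiv.Perm (Fin n)) : ℕ :=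
  ((Finset.range n ×ˢ Finset.range n).filter (fun p =>
    p.1 + 1 < p.2 ∧ permVal π p.1 < permVal π (p.1 + 1) ∧
      permVal π (p.1 + 1) < permVal π p.2)).card

/-- Number of occurrences of the generalized pattern 13-2. -/
def occ13_2 {n : ℕ} (π : Equiv.Perm (Fin n)) : ℕ :=
  ((Finset.range n ×ˢ Finset.range n).filter (fun p =>
    p.1 + 1 < p.2 ∧ permVal π p.1 < permVal π p.2 ∧
      permVal π p.2 < permVal π (p.1 + 1))).card

/-- Number of occurrences of the generalized pattern 21-3. -/
def occ21_3 {n : ℕ} (π : Equiv.Perm (Fin n)) : ℕ :=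
  ((Finset.range n ×ˢ Finset.range n).filter (fun p =>
    p.1 + 1 < p.2 ∧ permVal π (p.1 + 1) < permVal π p.1 ∧
      permVal π p.1 < permVal π p.2)).card

/-- Number of occurrences of the generalized pattern 23-1. -/
def occ23_1 {n : ℕ} (π : Equiv.Perm (Fin n)) : ℕ :=
  ((Finset.range n ×ˢ Finset.range n).filter (fun p =>
    p.1 + 1 < p.2 ∧ permVal π p.2 < permVal π p.1 ∧
      permVal π p.1 < permVal π (p.1 + 1))).card

/-- Number of occurrences of the generalized pattern 31-2. -/
def occ31_2 {n : ℕ} (π : Equiv.Perm (Fin n)) : ℕ :=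
  ((Finset.range n ×ˢ Finset.range n).filter (fun p =>
    p.1 + 1 < p.2 ∧ permVal π (p.1 + 1) < permVal π p.2 ∧
      permVal π p.2 < permVal π p.1)).card

/-- Number of occurrences of the generalized pattern 32-1. -/
def occ32_1 {n : ℕ} (π : Equiv.Perm (Fin n)) : ℕ :=
  ((Finset.range n ×ˢ Finset.range n).filter (fun p =>
    p.1 + 1 < p.2 ∧ permVal π p.2 < permVal π (p.1 + 1) ∧
      permVal π (p.1 + 1) < permVal π p.1)).card

open Equiv Finset

def Av {n : ℕ} (π : Equiv.Perm (Fin n)) : Prop :=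
  ∀ i j : ℕ, i + 1 < j → j < n →
    permVal π i < permVal π (i + 1) → permVal π j < permVal π i

lemma permVal_lt {n : ℕ} (π : Equiv.Perm (Fin n)) {i : ℕ} (h : i < n) :
    permVal π i < n := by
  simp only [permVal, dif_pos h]
  exact (π ⟨i, h⟩).isLt

lemma permVal_inj {n : ℕ} (π : Equiv.Perm (Fin n)) {i j : ℕ} (hi : i < n) (hj : j < n)
    (hij : i ≠ j) : permVal π i ≠ permVal π j := by
  simp only [permVal, dif_pos hi, dif_pos hj]
  intro h
  have : (⟨i, hi⟩ : Fin n) = ⟨j, hj⟩ := π.injective (Fin.val_injective h)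
  exact hij (by simpa using congrArg Fin.val this)

lemma occ_eq_zero_iff {n : ℕ} (π : Equiv.Perm (Fin n)) :
    (occ12_3 π = 0 ∧ occ13_2 π = 0) ↔ Av π := by
  constructor
  · rintro ⟨h1, h2⟩ i j hij hj hasc
    rw [occ12_3, Finset.card_eq_zero, Finset.filter_eq_empty_iff] at h1
    rw [occ13_2, Finset.card_eq_zero, Finset.filter_eq_empty_iff] at h2
    have hmem : ((i, j) : ℕ × ℕ) ∈ Finset.range n ×ˢ Finset.range n := by
      simp only [Finset.mem_product, Finset.mem_range]
      omega
    have H1 := h1 hmem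
    have H2 := h2 hmem
    simp only at H1 H2
    have hne1 : permVal π j ≠ permVal π i := permVal_inj π (by omega) (by omega) (by omega)
    have hne2 : permVal π j ≠ permVal π (i + 1) :=
      permVal_inj π (by omega) (by omega) (by omega)
    omega
  · intro hAv
    constructor
    · rw [occ12_3, Finset.card_eq_zero, Finset.filter_eq_empty_iff]
      rintro ⟨a, b⟩ hm
      simp only [Finset.mem_product, Finset.mem_range] at hm
      simp only [not_and]
      intro hab h1 h2
      have := hAv a b hab hm.2 h1
      omega
    · rw [occ13_2, Finset.card_eq_zero, Finset.filter_eq_empty_iff]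
      rintro ⟨a, b⟩ hm
      simp only [Finset.mem_product, Finset.mem_range] at hm
      simp only [not_and]
      intro hab h1 h2
      have := hAv a b hab hm.2 (lt_trans h1 h2)
      omega

def prep {m : ℕ} (σ : Equiv.Perm (Fin m)) : Equiv.Perm (Fin (m + 1)) where
  toFun := Fin.cases (Fin.last m) (fun k => (σ k).castSucc)
  invFun := Fin.lastCases 0 (fun k => (σ.symm k).succ)
  left_inv := by
    intro i
    induction i using Fin.cases <;> simp
  right_inv := by
    intro j
    induction j using Fin.lastCases <;> simp

def Phi {n : ℕ} (σ : Equiv.Perm (Fin (n + 1))) (b : Bool) : Equiv.Perm (Fin (n + 2)) :=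
  (if b then Equiv.swap (Fin.last (n + 1)) ((Fin.last n).castSucc) else 1) * prep σ

lemma phi_zero {n : ℕ} (σ : Equiv.Perm (Fin (n + 1))) (b : Bool) :
    permVal (Phi σ b) 0 = if b then n else n + 1 := by
  have h0 : (0 : ℕ) < n + 2 := by omega
  simp only [permVal, dif_pos h0]
  have he : (⟨0, h0⟩ : Fin (n + 2)) = 0 := rfl
  rw [he]
  cases b <;>
    simp [Phi, prep, Equiv.swap_apply_left, Equiv.Perm.mul_apply]

lemma phi_succ {n : ℕ} (σ : Equiv.Perm (Fin (n + 1))) (b : Bool) {k : ℕ} (hk : k < n + 1) :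
    permVal (Phi σ b) (k + 1) =
      if b = true ∧ permVal σ k = n then n + 1 else permVal σ k := by
  have hk1 : k + 1 < n + 2 := by omega
  simp only [permVal, dif_pos hk1, dif_pos hk]
  have hps : (prep σ) ⟨k + 1, hk1⟩ = (σ ⟨k, hk⟩).castSucc := by
    have he : (⟨k + 1, hk1⟩ : Fin (n + 2)) = Fin.succ ⟨k, hk⟩ := rfl
    rw [he]
    simp [prep]
  cases b with
  | false =>
    simp [Phi, hps, Equiv.Perm.mul_apply]
  | true =>
    simp only [Phi, if_pos, Equiv.Perm.mul_apply, hps]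
    by_cases hv : σ ⟨k, hk⟩ = Fin.last n
    · rw [hv, Equiv.swap_apply_right]
      simp [hv]
    · rw [Equiv.swap_apply_of_ne_of_ne]
      · have : (σ ⟨k, hk⟩ : ℕ) ≠ n := by
          intro h
          exact hv (Fin.ext (by simpa using h))
        simp [this]
      · exact ne_of_lt (Fin.castSucc_lt_last _)
      · intro h
        exact hv (Fin.castSucc_injective _ h)

lemma phi_lt_iff {n : ℕ} (σ : Equiv.Perm (Fin (n + 1))) (b : Bool) {k l : ℕ}
    (hk : k < n + 1) (hl : l < n + 1) :
    permVal (Phi σ b) (k + 1) < permVal (Phi σ b) (l + 1) ↔ permVal σ k < permVal σ l := by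
  rw [phi_succ σ b hk, phi_succ σ b hl]
  have h1 : permVal σ k < n + 1 := permVal_lt σ hk
  have h2 : permVal σ l < n + 1 := permVal_lt σ hl
  cases b with
  | false => simp
  | true =>
    simp only [true_and]
    split_ifs <;> omega

lemma av_phi_iff {n : ℕ} (σ : Equiv.Perm (Fin (n + 1))) (b : Bool) :
    Av (Phi σ b) ↔ Av σ := by
  constructor
  · intro h i j hij hj hasc
    have hasc' : permVal (Phi σ b) (i + 1) < permVal (Phi σ b) (i + 1 + 1) :=
      (phi_lt_iff σ b (by omega) (by omega)).mpr hasc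
    have := h (i + 1) (j + 1) (by omega) (by omega) hasc'
    exact (phi_lt_iff σ b (by omega) (by omega)).mp this
  · intro h i j hij hj hasc
    match i with
    | 0 =>
      obtain ⟨j', rfl⟩ : ∃ j', j = j' + 1 := ⟨j - 1, by omega⟩
      rw [phi_zero] at hasc ⊢
      rw [phi_succ σ b (by omega)] at hasc
      rw [phi_succ σ b (by omega)]
      have hs0 : permVal σ 0 < n + 1 := permVal_lt σ (by omega)
      have hsj : permVal σ j' < n + 1 := permVal_lt σ (by omega)
      cases b with
      | false => simp only [Bool.false_eq_true, false_and, if_false] at hasc ⊢; omega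
      | true =>
        simp only [true_and, if_true] at hasc ⊢
        have h0n : permVal σ 0 = n := by
          by_contra hne
          rw [if_neg hne] at hasc
          omega
        have hjn : permVal σ j' ≠ n := fun hh =>
          permVal_inj σ (i := j') (j := 0) (by omega) (by omega) (by omega)
            (hh.trans h0n.symm)
        rw [if_neg hjn]
        omega
    | i' + 1 =>
      obtain ⟨j', rfl⟩ : ∃ j', j = j' + 1 := ⟨j - 1, by omega⟩
      have hasc' : permVal σ i' < permVal σ (i' + 1) :=
        (phi_lt_iff σ b (by omega) (by omega)).mp hasc
      have := h i' j' (by omega) (by omega) hasc'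
      exact (phi_lt_iff σ b (by omega) (by omega)).mpr this

lemma av_first {n : ℕ} (π : Equiv.Perm (Fin (n + 2))) (h : Av π) :
    n ≤ permVal π 0 := by
  set a : ℕ := (π.symm (Fin.last (n + 1)) : ℕ) with ha_def
  have ha : a < n + 2 := (π.symm (Fin.last (n + 1))).isLt
  have hπa : permVal π a = n + 1 := by
    simp only [permVal, dif_pos ha]
    have : (⟨a, ha⟩ : Fin (n + 2)) = π.symm (Fin.last (n + 1)) := by
      simp [ha_def]
    rw [this, Equiv.apply_symm_apply, Fin.val_last]
  have chain : ∀ k, k < a → permVal π k ≤ permVal π 0 := by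
    intro k
    induction k with
    | zero => intro _; exact le_refl _
    | succ k' ih =>
      intro hk
      have hdesc : ¬ permVal π k' < permVal π (k' + 1) := by
        intro hasc
        have := h k' a (by omega) ha hasc
        have hlt : permVal π k' < n + 2 := permVal_lt π (by omega)
        omega
      have := ih (by omega)
      omega
  by_contra hcon
  push_neg at hcon
  have ha0 : a ≠ 0 := by
    intro h0
    rw [h0] at hπa
    omega
  set q : ℕ := (π.symm ⟨n, by omega⟩ : ℕ) with hq_def
  have hq : q < n + 2 := (π.symm (⟨n, by omega⟩ : Fin (n + 2))).isLt
  have hπq : permVal π q = n := by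
    simp only [permVal, dif_pos hq]
    have : (⟨q, hq⟩ : Fin (n + 2)) = π.symm ⟨n, by omega⟩ := by
      simp [hq_def]
    rw [this, Equiv.apply_symm_apply]
  have hq0 : q ≠ 0 := by
    intro h0
    rw [h0] at hπq
    omega
  have hqa : q ≠ a := by
    intro h0
    rw [h0, hπa] at hπq
    omega
  rcases lt_or_gt_of_ne hqa with hlt | hgt
  · have := chain q hlt
    omega
  · have hkey : a - 1 + 1 = a := by omega
    have hasc : permVal π (a - 1) < permVal π (a - 1 + 1) := by
      rw [hkey, hπa]
      have h1 : permVal π (a - 1) < n + 2 := permVal_lt π (by omega)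
      have h2 : permVal π (a - 1) ≠ permVal π a :=
        permVal_inj π (by omega) ha (by omega)
      omega
    have h3 := h (a - 1) q (by omega) hq hasc
    have h4 : permVal π (a - 1) ≤ permVal π 0 := by
      rcases Nat.eq_zero_or_pos (a - 1) with h5 | h5
      · rw [h5]
      · exact chain (a - 1) (by omega)
    omega

lemma prep_succ {m : ℕ} (σ : Equiv.Perm (Fin m)) (k : Fin m) :
    prep σ k.succ = (σ k).castSucc := by
  simp [prep]

lemma prep_zero {m : ℕ} (σ : Equiv.Perm (Fin m)) :
    prep σ 0 = Fin.last m := by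
  simp [prep]

lemma phi_inj {n : ℕ} {σ σ' : Equiv.Perm (Fin (n + 1))} {b b' : Bool}
    (h : Phi σ b = Phi σ' b') : σ = σ' ∧ b = b' := by
  have h0 : permVal (Phi σ b) 0 = permVal (Phi σ' b') 0 := by rw [h]
  rw [phi_zero, phi_zero] at h0
  have hb : b = b' := by
    cases b <;> cases b' <;> simp_all <;> omega
  subst hb
  have hprep : prep σ = prep σ' := mul_left_cancel h
  refine ⟨?_, rfl⟩
  ext k
  have := congrArg (fun e : Equiv.Perm (Fin (n + 2)) => e k.succ) hprep
  simp only [prep_succ] at this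
  exact congrArg Fin.val (Fin.castSucc_injective _ this)

lemma phi_surj {n : ℕ} (π : Equiv.Perm (Fin (n + 2))) (h : Av π) :
    ∃ σ b, Phi σ b = π := by
  have h0 := av_first π h
  have h0' : permVal π 0 < n + 2 := permVal_lt π (by omega)
  have hpv : permVal π 0 = (π 0 : ℕ) := by
    have h00 : (0 : ℕ) < n + 2 := by omega
    simp only [permVal, dif_pos h00]
    rfl
  set b : Bool := decide (permVal π 0 = n) with hb_def
  set s : Equiv.Perm (Fin (n + 2)) :=
    if b then Equiv.swap (Fin.last (n + 1)) ((Fin.last n).castSucc) else 1 with hs_def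
  set τ : Equiv.Perm (Fin (n + 2)) := s * π with hτ_def
  have hτ0 : τ 0 = Fin.last (n + 1) := by
    rcases (by omega : permVal π 0 = n ∨ permVal π 0 = n + 1) with hv | hv
    · have hb : b = true := by simp [hb_def, hv]
      have hπ0 : π 0 = (Fin.last n).castSucc := by
        apply Fin.ext
        simp [← hpv, hv]
      rw [hτ_def, hs_def, hb, if_pos rfl]
      simp [Equiv.Perm.mul_apply, hπ0, Equiv.swap_apply_right]
    · have hb : b = false := by simp [hb_def, hv]
      have hπ0 : π 0 = Fin.last (n + 1) := by
        apply Fin.ext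
        simp [← hpv, hv]
      rw [hτ_def, hs_def, hb, if_neg (by simp)]
      simp [hπ0]
  have hne : ∀ k : Fin (n + 1), τ k.succ ≠ Fin.last (n + 1) := by
    intro k hk
    have : k.succ = 0 := τ.injective (hk.trans hτ0.symm)
    exact Fin.succ_ne_zero k this
  have hinj : Function.Injective (fun k : Fin (n + 1) => (τ k.succ).castPred (hne k)) := by
    intro k l hkl
    have h2 : τ k.succ = τ l.succ := by
      have := congrArg Fin.castSucc hkl
      simpa [Fin.castSucc_castPred] using this
    exact Fin.succ_injective _ (τ.injective h2)
  set σ : Equiv.Perm (Fin (n + 1)) :=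
    Equiv.ofBijective _ (Finite.injective_iff_bijective.mp hinj) with hσ_def
  have hσ : ∀ k, σ k = (τ k.succ).castPred (hne k) := fun k => rfl
  have hprep : prep σ = τ := by
    apply Equiv.ext
    intro x
    induction x using Fin.cases with
    | zero => rw [prep_zero, hτ0]
    | succ k => rw [prep_succ, hσ k, Fin.castSucc_castPred]
  refine ⟨σ, b, ?_⟩
  have hphi : Phi σ b = s * prep σ := rfl
  have hss : s * s = 1 := by
    rw [hs_def]
    rcases Bool.eq_false_or_eq_true b with hb | hb <;> rw [hb] <;>
      simp [Equiv.swap_mul_self]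
  rw [hphi, hprep, hτ_def, ← mul_assoc, hss, one_mul]

lemma step_card (n : ℕ) :
    (Finset.univ.filter (fun π : Equiv.Perm (Fin (n + 2)) =>
      occ12_3 π = 0 ∧ occ13_2 π = 0)).card
    = 2 * (Finset.univ.filter (fun π : Equiv.Perm (Fin (n + 1)) =>
      occ12_3 π = 0 ∧ occ13_2 π = 0)).card := by
  have key := Finset.card_bij
    (s := (Finset.univ.filter (fun π : Equiv.Perm (Fin (n + 1)) =>
      occ12_3 π = 0 ∧ occ13_2 π = 0)) ×ˢ (Finset.univ : Finset Bool))
    (t := Finset.univ.filter (fun π : Equiv.Perm (Fin (n + 2)) =>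
      occ12_3 π = 0 ∧ occ13_2 π = 0))
    (fun p _ => Phi p.1 p.2)
    (by
      rintro ⟨σ, b⟩ hp
      simp only [Finset.mem_product, Finset.mem_filter, Finset.mem_univ, true_and,
        and_true] at hp
      simp only [Finset.mem_filter, Finset.mem_univ, true_and]
      rw [occ_eq_zero_iff] at hp ⊢
      exact (av_phi_iff σ b).mpr hp)
    (by
      rintro ⟨σ, b⟩ _ ⟨σ', b'⟩ _ heq
      obtain ⟨h1, h2⟩ := phi_inj heq
      exact Prod.ext h1 h2)
    (by
      intro π hπ
      simp only [Finset.mem_filter, Finset.mem_univ, true_and] at hπ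
      rw [occ_eq_zero_iff] at hπ
      obtain ⟨σ, b, hphi⟩ := phi_surj π hπ
      refine ⟨(σ, b), ?_, hphi⟩
      simp only [Finset.mem_product, Finset.mem_filter, Finset.mem_univ, true_and, and_true]
      rw [occ_eq_zero_iff]
      exact (av_phi_iff σ b).mp (hphi ▸ hπ))
  rw [← key, Finset.card_product]
  simp [mul_comm]

lemma base_card :
    (Finset.univ.filter (fun π : Equiv.Perm (Fin 1) =>
      occ12_3 π = 0 ∧ occ13_2 π = 0)).card = 1 := by
  have hall : ∀ π : Equiv.Perm (Fin 1), occ12_3 π = 0 ∧ occ13_2 π = 0 := by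
    intro π
    constructor
    · rw [occ12_3, Finset.card_eq_zero, Finset.filter_eq_empty_iff]
      rintro ⟨a, b⟩ hm
      simp only [Finset.mem_product, Finset.mem_range] at hm
      simp only [not_and]
      intro hab
      exact absurd hm.2 (by omega)
    · rw [occ13_2, Finset.card_eq_zero, Finset.filter_eq_empty_iff]
      rintro ⟨a, b⟩ hm
      simp only [Finset.mem_product, Finset.mem_range] at hm
      simp only [not_and]
      intro hab
      exact absurd hm.2 (by omega)
  rw [Finset.filter_true_of_mem (fun π _ => hall π)]
  simp [Finset.card_univ]

lemma pow_card (m : ℕ) :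
    (Finset.univ.filter (fun π : Equiv.Perm (Fin (m + 1)) =>
      occ12_3 π = 0 ∧ occ13_2 π = 0)).card = 2 ^ m := by
  induction m with
  | zero => exact base_card
  | succ k ih => rw [step_card k, ih]; ring

theorem stmt0 (n : ℕ) (hn : 1 ≤ n) :
    (Finset.univ.filter (fun π : Equiv.Perm (Fin n) =>
      occ12_3 π = 0 ∧ occ13_2 π = 0)).card = 2 ^ (n - 1) := by
  obtain ⟨m, rfl⟩ : ∃ m, n = m + 1 := ⟨n - 1, by omega⟩
  simpa using pow_card m
end

section
/- For every n ≥ 1, the number of permutations of {1,...,n} avoiding the generalized pattern 12-3 and containing exactly one occurrence of the generalized pattern 13-2 equals (n-3)·2^(n-2) + 1. -/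
/-!
Write an arrangement of `{0, …, m}` as `d ++ m :: t`. Avoiding 12-3 forces `d` to be decreasing
(an ascent in `d` followed by `m` would be an occurrence), and then the occurrences of 12-3 are
those of `t`, while the occurrences of 13-2 are those of `t` together with the pairs
`(min d, m)-x` for the entries `x` of `t` above `min d`. Both counts only see relative order, so
the number `a k c = countAvoiding (range k) c` of arrangements of a `k`-set avoiding 12-3 with
exactly `c` occurrences of 13-2 can be computed by summing over the set `A` of entries of `d`.
For `c = 0`, `A` must be a final segment of `{0, …, m-1}`, so `a (m+1) 0 = ∑_{j ≤ m} a j 0` and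
`a (k+1) 0 = 2^k`. For `c = 1`, `A` may also be a final segment from `a` with one hole `c`, so
`a (m+1) 1 = ∑_{j ≤ m} a j 1 + ∑_{a < c < m} 2^a`. Subtracting consecutive instances gives
`a (m+2) 1 + 1 = 2 a (m+1) 1 + 2^m`, whose solution is `a (k+1) 1 = (k - 2) 2^(k-1) + 1`.
-/

open Finset

namespace List

/-- The number of occurrences in `l` of the vincular pattern `xy-z` described by `P`: the pairs of positions
`i + 1 < j` with `P l[i] l[i+1] l[j]`. -/
def vincularCount (P : ℕ → ℕ → ℕ → Prop) [∀ a b x, Decidable (P a b x)] : List ℕ → ℕ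
  | a :: b :: t => t.countP (fun x => P a b x) + vincularCount P (b :: t)
  | _ => 0

section
variable (P : ℕ → ℕ → ℕ → Prop) [∀ a b x, Decidable (P a b x)]

@[simp] lemma vincularCount_nil : vincularCount P [] = 0 := rfl

@[simp] lemma vincularCount_singleton (a : ℕ) : vincularCount P [a] = 0 := rfl

@[simp] lemma vincularCount_cons_cons (a b : ℕ) (t : List ℕ) :
    vincularCount P (a :: b :: t) = t.countP (fun x => P a b x) + vincularCount P (b :: t) := rfl

lemma countP_map_range (p : ℕ → Prop) [DecidablePred p] (f : ℕ → ℕ) (n : ℕ) :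
    ((range n).map f).countP (fun x => p x) = ∑ j ∈ Finset.range n, if p (f j) then 1 else 0 := by
  induction n with
  | zero => simp
  | succ n ih =>
    rw [List.range_succ, List.map_append, List.countP_append, ih, Finset.sum_range_succ]
    simp

lemma vincularCount_map_range (f : ℕ → ℕ) (n : ℕ) :
    vincularCount P ((range n).map f) = ∑ i ∈ Finset.range n, ∑ j ∈ Finset.range n,
      if i + 1 < j ∧ P (f i) (f (i + 1)) (f j) then 1 else 0 := by
  induction n generalizing f with
  | zero => simp
  | succ n ih =>
    rcases n with _ | n
    · simp [Finset.filter_singleton]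
    have hsplit : (range (n + 2)).map f = f 0 :: (range (n + 1)).map (fun i => f (i + 1)) := by
      simp [List.range_succ_eq_map (n := n + 1)]
    have htail : (range (n + 1)).map (fun i => f (i + 1)) =
        f 1 :: (range n).map (fun j => f (j + 2)) := by
      simp [List.range_succ_eq_map (n := n)]
    rw [hsplit, htail, vincularCount_cons_cons, ← htail, ih, countP_map_range,
      Finset.sum_range_succ' _ (n + 1), add_comm]
    congr 1
    · refine Finset.sum_congr rfl fun i _ => ?_
      rw [Finset.sum_range_succ' _ (n + 1)]
      simp
    · rw [Finset.sum_range_succ', Finset.sum_range_succ']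
      simp

lemma vincularCount_map (f : ℕ → ℕ) {l : List ℕ}
    (h : ∀ a ∈ l, ∀ b ∈ l, ∀ x ∈ l, P (f a) (f b) (f x) ↔ P a b x) :
    vincularCount P (l.map f) = vincularCount P l := by
  induction l with
  | nil => rfl
  | cons a l ih =>
    rcases l with _ | ⟨b, t⟩
    · rfl
    · rw [map_cons, map_cons, vincularCount_cons_cons, ← map_cons, vincularCount_cons_cons,
        ih fun a ha b hb x hx => h a (mem_cons_of_mem _ ha) b (mem_cons_of_mem _ hb) x
          (mem_cons_of_mem _ hx), countP_map]
      congr 1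
      refine countP_congr fun x hx => ?_
      simp only [Function.comp_apply, decide_eq_true_eq]
      exact h a mem_cons_self b (mem_cons_of_mem _ mem_cons_self) x
        (mem_cons_of_mem _ (mem_cons_of_mem _ hx))

end

def occ12_3 (l : List ℕ) : ℕ := vincularCount (fun a b x => a < b ∧ b < x) l
def occ13_2 (l : List ℕ) : ℕ := vincularCount (fun a b x => a < x ∧ x < b) l

section

variable {M : ℕ} {d t : List ℕ}

lemma occ12_3_cons_of_forall_lt (ht : ∀ x ∈ t, x < M) : (M :: t).occ12_3 = t.occ12_3 := by
  rcases t with _ | ⟨b, t⟩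
  · rfl
  · have hb := ht b mem_cons_self
    simp only [occ12_3, vincularCount_cons_cons, add_eq_right, countP_eq_zero]
    intro x _
    simp [hb.le]

lemma occ13_2_cons_of_forall_lt (ht : ∀ x ∈ t, x < M) : (M :: t).occ13_2 = t.occ13_2 := by
  rcases t with _ | ⟨b, t⟩
  · rfl
  · simp only [occ13_2, vincularCount_cons_cons, add_eq_right, countP_eq_zero]
    intro x hx
    simp [(ht x (mem_cons_of_mem b hx)).le]

lemma occ12_3_append_cons_of_forall_lt (hd : d.Pairwise (· > ·)) (hdM : ∀ x ∈ d, x < M)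
    (htM : ∀ x ∈ t, x < M) : (d ++ M :: t).occ12_3 = t.occ12_3 := by
  induction d with
  | nil => exact occ12_3_cons_of_forall_lt htM
  | cons a d ih =>
    rw [pairwise_cons] at hd
    have hdM' : ∀ x ∈ d, x < M := fun x hx => hdM x (mem_cons_of_mem a hx)
    rw [← ih hd.2 hdM']
    rcases d with _ | ⟨b, d⟩
    · simp only [cons_append, nil_append, occ12_3, vincularCount_cons_cons, add_eq_right,
        countP_eq_zero]
      intro x hx
      simp [(htM x hx).le]
    · simp only [cons_append, occ12_3, vincularCount_cons_cons, add_eq_right, countP_eq_zero]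
      intro x _
      simp [(hd.1 b mem_cons_self).le]

lemma occ13_2_append_cons_of_forall_lt (hd : d.Pairwise (· > ·)) (hdM : ∀ x ∈ d, x < M)
    (htM : ∀ x ∈ t, x < M) :
    (d ++ M :: t).occ13_2 = t.occ13_2 + t.countP (fun x => ∃ a ∈ d, a < x) := by
  induction d with
  | nil => simpa using occ13_2_cons_of_forall_lt htM
  | cons a d ih =>
    rw [pairwise_cons] at hd
    have hdM' : ∀ x ∈ d, x < M := fun x hx => hdM x (mem_cons_of_mem a hx)
    rcases d with _ | ⟨b, d⟩
    · simp only [cons_append, nil_append, occ13_2, vincularCount_cons_cons]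
      rw [← occ13_2, occ13_2_cons_of_forall_lt htM, add_comm]
      congr 1
      exact countP_congr fun x hx => by simp [htM x hx]
    · have hba := hd.1 b mem_cons_self
      simp only [cons_append, occ13_2, vincularCount_cons_cons] at ih ⊢
      rw [ih hd.2 hdM', countP_eq_zero.2 fun x _ => by simp; omega, zero_add]
      congr 1
      refine countP_congr fun x _ => ?_
      simp only [mem_cons, exists_eq_or_imp, decide_eq_true_eq]
      exact ⟨Or.inr, fun h => h.elim (fun h => Or.inl (hba.trans h)) id⟩

lemma pairwise_gt_of_occ12_3_eq_zero (hnd : d.Nodup) (hdM : ∀ x ∈ d, x < M)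
    (h : (d ++ M :: t).occ12_3 = 0) : d.Pairwise (· > ·) := by
  induction d with
  | nil => exact Pairwise.nil
  | cons a d ih =>
    rw [nodup_cons] at hnd
    have hdM' : ∀ x ∈ d, x < M := fun x hx => hdM x (mem_cons_of_mem a hx)
    rcases d with _ | ⟨b, d⟩
    · exact pairwise_singleton _ a
    · simp only [cons_append, occ12_3, vincularCount_cons_cons, Nat.add_eq_zero_iff,
        countP_eq_zero, decide_eq_true_eq] at h
      have hab : b < a := by
        have := h.1 M (mem_append_right d mem_cons_self)
        have hne : a ≠ b := fun hab => hnd.1 (hab ▸ mem_cons_self)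
        have := hdM' b mem_cons_self
        omega
      have hrest := ih hnd.2 hdM' h.2
      rw [pairwise_cons] at hrest ⊢
      exact ⟨fun x hx => (mem_cons.1 hx).elim (· ▸ hab) (fun hx => (hrest.1 x hx).trans hab),
        pairwise_cons.2 hrest⟩

variable {s : Finset ℕ} {f : ℕ → ℕ} {l : List ℕ}

lemma occ12_3_map_of_strictMonoOn (hf : StrictMonoOn f s) (hl : ∀ x ∈ l, x ∈ s) :
    (l.map f).occ12_3 = l.occ12_3 :=
  vincularCount_map _ f fun a ha b hb x hx => by
    rw [hf.lt_iff_lt (hl a ha) (hl b hb), hf.lt_iff_lt (hl b hb) (hl x hx)]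

lemma occ13_2_map_of_strictMonoOn (hf : StrictMonoOn f s) (hl : ∀ x ∈ l, x ∈ s) :
    (l.map f).occ13_2 = l.occ13_2 :=
  vincularCount_map _ f fun a ha b hb x hx => by
    rw [hf.lt_iff_lt (hl a ha) (hl x hx), hf.lt_iff_lt (hl x hx) (hl b hb)]

end

end List

def permList {n : ℕ} (π : Equiv.Perm (Fin n)) : List ℕ := (List.range n).map (permVal π)

lemma occ12_3_eq_occ12_3_permList {n : ℕ} (π : Equiv.Perm (Fin n)) :
    occ12_3 π = (permList π).occ12_3 := by
  rw [occ12_3, card_filter, sum_product, permList, List.occ12_3,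
    List.vincularCount_map_range]

lemma occ13_2_eq_occ13_2_permList {n : ℕ} (π : Equiv.Perm (Fin n)) :
    occ13_2 π = (permList π).occ13_2 := by
  rw [occ13_2, card_filter, sum_product, permList, List.occ13_2,
    List.vincularCount_map_range]

def arrangements (s : Finset ℕ) : Finset (List ℕ) := ⟨s.val.lists, Multiset.lists_nodup_finset s⟩

lemma mem_arrangements {s : Finset ℕ} {l : List ℕ} :
    l ∈ arrangements s ↔ l.Nodup ∧ l.toFinset = s := by
  rw [arrangements, mem_mk, Multiset.mem_lists_iff, Multiset.quot_mk_to_coe]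
  constructor
  · intro h
    have hl : l.Nodup := Multiset.coe_nodup.1 (h ▸ s.nodup)
    exact ⟨hl, val_injective (by rw [List.toFinset_val, hl.dedup, h])⟩
  · rintro ⟨hl, rfl⟩
    rw [List.toFinset_val, hl.dedup]

lemma permVal_of_lt {n : ℕ} (π : Equiv.Perm (Fin n)) {i : ℕ} (hi : i < n) :
    permVal π i = π ⟨i, hi⟩ := dif_pos hi

lemma permList_mem_arrangements {n : ℕ} (π : Equiv.Perm (Fin n)) :
    permList π ∈ arrangements (range n) := by
  refine mem_arrangements.2 ⟨List.nodup_range.map_on fun i hi j hj h => ?_, ?_⟩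
  · rw [List.mem_range] at hi hj
    rw [permVal_of_lt π hi, permVal_of_lt π hj] at h
    simpa using π.injective (Fin.ext h)
  · ext x
    simp only [permList, List.mem_toFinset, List.mem_map, List.mem_range, mem_range]
    constructor
    · rintro ⟨i, hi, rfl⟩
      rw [permVal_of_lt π hi]
      exact Fin.isLt _
    · intro hx
      exact ⟨π.symm ⟨x, hx⟩, Fin.isLt _, by rw [permVal_of_lt π (Fin.isLt _)]; simp⟩

lemma permList_injective {n : ℕ} : Function.Injective (permList (n := n)) := by
  intro π σ h
  ext i
  have := congrArg (fun l => l[i]?) h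
  simpa [permList, permVal_of_lt _ i.isLt] using this

lemma exists_permList_eq {n : ℕ} {l : List ℕ} (hl : l ∈ arrangements (range n)) :
    ∃ π : Equiv.Perm (Fin n), permList π = l := by
  obtain ⟨hnd, hfs⟩ := mem_arrangements.1 hl
  have hlen : l.length = n := by
    rw [← List.toFinset_card_of_nodup hnd, hfs, card_range]
  have hlt (i : Fin n) : l[i.val] < n := by
    rw [← mem_range, ← hfs, List.mem_toFinset]
    exact List.getElem_mem _
  let f : Fin n → Fin n := fun i => ⟨l[i.val], hlt i⟩
  have hf : Function.Injective f := fun i j h =>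
    Fin.ext ((List.Nodup.getElem_inj_iff hnd).1 (Fin.mk.inj_iff.1 h))
  refine ⟨Equiv.ofBijective f hf.bijective_of_finite, List.ext_getElem (by simp [permList, hlen]) ?_⟩
  intro i hi _
  simp [permList, permVal_of_lt _ (by simpa [permList] using hi), f]

lemma card_filter_perm_eq_card_filter_arrangements (n : ℕ) (p : List ℕ → Prop) [DecidablePred p] :
    #{π : Equiv.Perm (Fin n) | p (permList π)} = #{l ∈ arrangements (range n) | p l} := by
  refine card_bij (fun π _ => permList π) (fun π hπ => ?_)
    (fun π _ σ _ h => permList_injective h) (fun l hl => ?_)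
  · simp only [mem_filter, mem_univ, true_and] at hπ ⊢
    exact ⟨permList_mem_arrangements π, hπ⟩
  · rw [mem_filter] at hl
    obtain ⟨π, rfl⟩ := exists_permList_eq hl.1
    exact ⟨π, by simpa using hl.2, rfl⟩

def gapCount (m : ℕ) (A : Finset ℕ) : ℕ := #{x ∈ range m \ A | ∃ a ∈ A, a < x}

def countAvoiding (s : Finset ℕ) (c : ℕ) : ℕ :=
  #{l ∈ arrangements s | l.occ12_3 = 0 ∧ l.occ13_2 = c}

section Decomposition

variable {m c : ℕ} {d t : List ℕ}

lemma append_cons_mem_arrangements_iff (hd : d.Nodup) (hdm : ∀ x ∈ d, x < m) :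
    d ++ m :: t ∈ arrangements (range (m + 1)) ↔ t ∈ arrangements (range m \ d.toFinset) := by
  simp only [mem_arrangements, List.nodup_append, List.nodup_cons, Finset.ext_iff,
    List.mem_toFinset, List.mem_append, List.mem_cons, mem_sdiff, mem_range, hd, true_and]
  constructor
  · rintro ⟨⟨⟨hmt, htnd⟩, hdisj⟩, hmem⟩
    refine ⟨htnd, fun x => ⟨fun hx => ⟨?_, fun hxd => hdisj x hxd x (Or.inr hx) rfl⟩, fun hx => ?_⟩⟩
    · have := (hmem x).1 (Or.inr (Or.inr hx))
      have : x ≠ m := fun h => hmt (h ▸ hx)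
      omega
    · rcases (hmem x).2 (by omega) with h | h | h
      · exact absurd h hx.2
      · omega
      · exact h
  · rintro ⟨htnd, hmem⟩
    refine ⟨⟨⟨fun hm => ((hmem m).1 hm).1.false, htnd⟩, ?_⟩, fun x => ⟨?_, fun hx => ?_⟩⟩
    · rintro x hxd y (rfl | hy) rfl
      · exact (hdm x hxd).false
      · exact ((hmem x).1 hy).2 hxd
    · rintro (h | rfl | h)
      · have := hdm x h; omega
      · omega
      · have := ((hmem x).1 h).1; omega
    · by_cases hxd : x ∈ d
      · exact Or.inl hxd
      · by_cases hxm : x = m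
        · exact Or.inr (Or.inl hxm)
        · exact Or.inr (Or.inr ((hmem x).2 ⟨by omega, hxd⟩))

lemma countP_exists_lt_eq_gapCount (ht : t ∈ arrangements (range m \ d.toFinset)) :
    t.countP (fun x => ∃ a ∈ d, a < x) = gapCount m d.toFinset := by
  obtain ⟨htnd, htfs⟩ := mem_arrangements.1 ht
  rw [List.countP_eq_length_filter, ← List.toFinset_card_of_nodup (htnd.filter _),
    List.toFinset_filter, htfs, gapCount]
  simp

lemma forall_lt_of_mem_arrangements {s : Finset ℕ} (ht : t ∈ arrangements s)
    (hs : s ⊆ range m) : ∀ x ∈ t, x < m := fun _ hx =>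
  mem_range.1 (hs ((mem_arrangements.1 ht).2 ▸ List.mem_toFinset.2 hx))

lemma append_cons_avoiding_iff (hd : d.Pairwise (· > ·)) (hdm : ∀ x ∈ d, x < m) :
    (d ++ m :: t ∈ arrangements (range (m + 1)) ∧
        (d ++ m :: t).occ12_3 = 0 ∧ (d ++ m :: t).occ13_2 = c) ↔
      (t ∈ arrangements (range m \ d.toFinset) ∧
        t.occ12_3 = 0 ∧ t.occ13_2 + gapCount m d.toFinset = c) := by
  rw [append_cons_mem_arrangements_iff hd.nodup hdm]
  refine and_congr_right fun ht => ?_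
  have htm := forall_lt_of_mem_arrangements ht sdiff_subset
  rw [List.occ12_3_append_cons_of_forall_lt hd hdm htm,
    List.occ13_2_append_cons_of_forall_lt hd hdm htm, countP_exists_lt_eq_gapCount ht]

theorem countAvoiding_range_succ_eq_sum_card_filter (m c : ℕ) :
    countAvoiding (range (m + 1)) c = ∑ A ∈ (range m).powerset,
      #{t ∈ arrangements (range m \ A) | t.occ12_3 = 0 ∧ t.occ13_2 + gapCount m A = c} := by
  have hsort {A : Finset ℕ} (hA : A ⊆ range m) :
      (A.sort (· ≥ ·)).Pairwise (· > ·) ∧ ∀ x ∈ A.sort (· ≥ ·), x < m :=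
    ⟨(sortedGT_sort A).pairwise, fun x hx => mem_range.1 (hA ((mem_sort _).1 hx))⟩
  rw [countAvoiding, ← card_sigma]
  symm
  refine card_bij (fun p _ => p.1.sort (· ≥ ·) ++ m :: p.2) ?_ ?_ ?_
  · rintro ⟨A, t⟩ hp
    simp only [mem_sigma, mem_powerset, mem_filter] at hp ⊢
    obtain ⟨hA, ht⟩ := hp
    rw [append_cons_avoiding_iff (hsort hA).1 (hsort hA).2, sort_toFinset]
    exact ht
  · rintro ⟨A, t⟩ hp ⟨A', t'⟩ hp' h
    simp only [mem_sigma, mem_powerset, mem_filter] at hp hp'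
    have hm (x) (hx : x ∈ A.sort (· ≥ ·)) : x ≠ m := ((hsort hp.1).2 x hx).ne
    have hmt : m ∉ t := fun hm => (forall_lt_of_mem_arrangements hp.2.1 sdiff_subset m hm).false
    obtain ⟨hsorts, -, rfl⟩ := (List.append_cons_inj_of_notMem (fun h => hm m h rfl) hmt).1 h
    obtain rfl : A = A' := by simpa using congrArg List.toFinset hsorts
    rfl
  · intro l hl
    rw [mem_filter] at hl
    have hml : m ∈ l := by
      rw [← List.mem_toFinset, (mem_arrangements.1 hl.1).2]
      exact self_mem_range_succ m
    obtain ⟨d, t, rfl⟩ := List.append_of_mem hml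
    obtain ⟨hnd, hfs⟩ := mem_arrangements.1 hl.1
    have hdm : ∀ x ∈ d, x < m := by
      intro x hx
      have hx' : x ∈ range (m + 1) := hfs ▸ List.mem_toFinset.2 (List.mem_append_left _ hx)
      have hxm : x ≠ m := fun h =>
        (List.nodup_cons.1 (List.nodup_middle.1 hnd)).1 (List.mem_append_left _ (h ▸ hx))
      have := mem_range.1 hx'
      omega
    have hd := List.pairwise_gt_of_occ12_3_eq_zero (hnd.sublist (List.sublist_append_left _ _))
      hdm hl.2.1
    refine ⟨⟨d.toFinset, t⟩, ?_, ?_⟩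
    · simp only [mem_sigma, mem_powerset, mem_filter]
      refine ⟨fun x hx => mem_range.2 (hdm x (List.mem_toFinset.1 hx)), ?_⟩
      rw [← append_cons_avoiding_iff hd hdm]
      exact hl
    · dsimp only
      rw [(List.toFinset_sort _ hd.nodup).2 (hd.imp le_of_lt)]

end Decomposition

lemma countAvoiding_le_of_strictMonoOn {s : Finset ℕ} {f : ℕ → ℕ} (hf : StrictMonoOn f s)
    (c : ℕ) : countAvoiding s c ≤ countAvoiding (s.image f) c := by
  refine card_le_card_of_injOn (List.map f) (fun l hl => ?_) fun l hl l' hl' h => ?_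
  · simp only [coe_filter, Set.mem_ofPred_eq, mem_arrangements] at hl ⊢
    obtain ⟨⟨hnd, hfs⟩, h12_3, h13_2⟩ := hl
    have hls : ∀ x ∈ l, x ∈ s := fun x hx => hfs ▸ List.mem_toFinset.2 hx
    refine ⟨⟨hnd.map_on fun x hx y hy => hf.injOn (hls x hx) (hls y hy), ?_⟩, ?_, ?_⟩
    · ext y
      simp [← hfs]
    · rwa [List.occ12_3_map_of_strictMonoOn hf hls]
    · rwa [List.occ13_2_map_of_strictMonoOn hf hls]
  · simp only [coe_filter, Set.mem_ofPred_eq, mem_arrangements] at hl hl'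
    have hls : ∀ x ∈ l, x ∈ s := fun x hx => hl.1.2 ▸ List.mem_toFinset.2 hx
    have hls' : ∀ x ∈ l', x ∈ s := fun x hx => hl'.1.2 ▸ List.mem_toFinset.2 hx
    have hleft {l : List ℕ} (hl : ∀ x ∈ l, x ∈ s) : (l.map f).map (Function.invFunOn f s) = l := by
      rw [List.map_map]
      exact (List.map_congr_left fun x hx => hf.injOn.leftInvOn_invFunOn (hl x hx)).trans l.map_id
    rw [← hleft hls, h, hleft hls']

lemma exists_strictMonoOn_image_eq {s s' : Finset ℕ} (h : #s = #s') :
    ∃ f : ℕ → ℕ, StrictMonoOn f s ∧ s.image f = s' := by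
  let e : s ≃o s' := (s.orderIsoOfFin rfl).symm.trans (s'.orderIsoOfFin h.symm)
  refine ⟨fun x => if hx : x ∈ s then e ⟨x, hx⟩ else 0, fun x hx y hy hxy => ?_, ?_⟩
  · simp only [dif_pos (mem_coe.1 hx), dif_pos (mem_coe.1 hy)]
    exact e.strictMono (Subtype.mk_lt_mk.2 hxy)
  · ext y
    simp only [mem_image]
    constructor
    · rintro ⟨x, hx, rfl⟩
      simp [hx]
    · intro hy
      exact ⟨e.symm ⟨y, hy⟩, coe_mem _, by simp⟩

lemma countAvoiding_congr_card {s s' : Finset ℕ} (h : #s = #s') (c : ℕ) :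
    countAvoiding s c = countAvoiding s' c := by
  obtain ⟨f, hf, rfl⟩ := exists_strictMonoOn_image_eq h
  obtain ⟨g, hg, hgs⟩ := exists_strictMonoOn_image_eq h.symm
  refine le_antisymm (countAvoiding_le_of_strictMonoOn hf c) ?_
  calc countAvoiding (s.image f) c ≤ countAvoiding ((s.image f).image g) c :=
        countAvoiding_le_of_strictMonoOn hg c
    _ = countAvoiding s c := by rw [hgs]

section Recursion

lemma arrangements_empty : arrangements ∅ = {[]} := by
  ext l
  rw [mem_arrangements, mem_singleton, List.toFinset_eq_empty_iff]
  exact ⟨And.right, fun h => ⟨h ▸ List.nodup_nil, h⟩⟩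

lemma countAvoiding_empty (c : ℕ) : countAvoiding ∅ c = if c = 0 then 1 else 0 := by
  rw [countAvoiding, arrangements_empty, filter_singleton]
  split_ifs <;> simp_all [List.occ12_3, List.occ13_2, eq_comm]

lemma card_filter_occ13_2_add (s : Finset ℕ) (g c : ℕ) :
    #{t ∈ arrangements s | t.occ12_3 = 0 ∧ t.occ13_2 + g = c} =
      if g ≤ c then countAvoiding s (c - g) else 0 := by
  split_ifs with hg
  · exact congrArg card (filter_congr fun t _ => and_congr_right fun _ => by omega)
  · exact card_eq_zero.2 (filter_eq_empty_iff.2 fun t _ h => hg (by omega))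

theorem countAvoiding_range_succ_eq_sum (m c : ℕ) :
    countAvoiding (range (m + 1)) c = ∑ A ∈ (range m).powerset,
      if gapCount m A ≤ c then countAvoiding (range (m - #A)) (c - gapCount m A) else 0 := by
  rw [countAvoiding_range_succ_eq_sum_card_filter]
  refine sum_congr rfl fun A hA => ?_
  rw [card_filter_occ13_2_add, countAvoiding_congr_card (s' := range (m - #A))]
  rw [card_sdiff_of_subset (mem_powerset.1 hA), card_range, card_range]

variable {m : ℕ} {A : Finset ℕ}

lemma gapCount_eq_card_sdiff (hne : A.Nonempty) :
    gapCount m A = #(Ico (A.min' hne) m \ A) := by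
  rw [gapCount]
  congr 1
  ext x
  simp only [mem_filter, mem_sdiff, mem_range, mem_Ico]
  constructor
  · rintro ⟨⟨hxm, hxA⟩, b, hb, hbx⟩
    exact ⟨⟨(A.min'_le b hb).trans hbx.le, hxm⟩, hxA⟩
  · rintro ⟨⟨hax, hxm⟩, hxA⟩
    refine ⟨⟨hxm, hxA⟩, A.min' hne, A.min'_mem hne, lt_of_le_of_ne hax ?_⟩
    rintro rfl
    exact hxA (A.min'_mem hne)

lemma eq_Ico_sdiff_of_subset_range (hA : A ⊆ range m) (hne : A.Nonempty) :
    A = Ico (A.min' hne) m \ (Ico (A.min' hne) m \ A) := by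
  refine (Finset.sdiff_sdiff_eq_self fun x hx => ?_).symm
  exact mem_Ico.2 ⟨A.min'_le x hx, mem_range.1 (hA hx)⟩

lemma gapCount_Ico (j : ℕ) : gapCount m (Ico j m) = 0 := by
  simp only [gapCount, card_eq_zero, filter_eq_empty_iff, mem_sdiff, mem_range, mem_Ico]
  rintro x ⟨hxm, hx⟩ ⟨a, ha, hax⟩
  omega

lemma gapCount_Ico_erase {a c : ℕ} (hac : a < c) (hcm : c < m) :
    gapCount m ((Ico a m).erase c) = 1 := by
  rw [gapCount, card_eq_one]
  refine ⟨c, eq_singleton_iff_unique_mem.2 ⟨?_, fun x hx => ?_⟩⟩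
  · simp only [mem_filter, mem_sdiff, mem_range, mem_erase, mem_Ico]
    exact ⟨⟨hcm, by simp⟩, a, ⟨hac.ne, le_rfl, hac.trans hcm⟩, hac⟩
  · simp only [mem_filter, mem_sdiff, mem_range, mem_erase, mem_Ico] at hx
    obtain ⟨⟨hxm, hx⟩, b, ⟨-, hab, -⟩, hbx⟩ := hx
    omega

lemma filter_gapCount_eq_zero (m : ℕ) :
    {A ∈ (range m).powerset | gapCount m A = 0} = (range (m + 1)).image (Ico · m) := by
  ext A
  simp only [mem_filter, mem_powerset, mem_image, mem_range]
  constructor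
  · rintro ⟨hA, hgap⟩
    rcases A.eq_empty_or_nonempty with rfl | hne
    · exact ⟨m, by omega, Ico_self m⟩
    · refine ⟨A.min' hne, Nat.lt_succ_of_lt (mem_range.1 (hA (A.min'_mem hne))), ?_⟩
      rw [gapCount_eq_card_sdiff hne, card_eq_zero] at hgap
      have hAeq := eq_Ico_sdiff_of_subset_range hA hne
      rw [hgap, sdiff_empty] at hAeq
      exact hAeq.symm
  · rintro ⟨j, -, rfl⟩
    exact ⟨fun x hx => mem_range.2 (mem_Ico.1 hx).2, gapCount_Ico j⟩

lemma filter_gapCount_eq_one (m : ℕ) :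
    {A ∈ (range m).powerset | gapCount m A = 1} =
      ((range m).sigma range).image fun p => (Ico p.2 m).erase p.1 := by
  ext A
  simp only [mem_filter, mem_powerset, mem_image, mem_sigma, mem_range, Sigma.exists]
  constructor
  · rintro ⟨hA, hgap⟩
    have hne : A.Nonempty := nonempty_iff_ne_empty.2 fun h => by simp [h, gapCount] at hgap
    rw [gapCount_eq_card_sdiff hne, card_eq_one] at hgap
    obtain ⟨c, hc⟩ := hgap
    have hcmem : c ∈ Ico (A.min' hne) m \ A := hc ▸ mem_singleton_self c
    rw [mem_sdiff, mem_Ico] at hcmem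
    have hac : A.min' hne ≠ c := fun h => hcmem.2 (h ▸ A.min'_mem hne)
    refine ⟨c, A.min' hne, ⟨hcmem.1.2, lt_of_le_of_ne hcmem.1.1 hac⟩, ?_⟩
    have hAeq := eq_Ico_sdiff_of_subset_range hA hne
    rw [hc, sdiff_singleton_eq_erase] at hAeq
    exact hAeq.symm
  · rintro ⟨c, a, ⟨hcm, hac⟩, rfl⟩
    exact ⟨fun x hx => mem_range.2 (mem_Ico.1 (mem_of_mem_erase hx)).2, gapCount_Ico_erase hac hcm⟩

lemma sum_filter_gapCount_eq_zero (m : ℕ) (g : ℕ → ℕ) :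
    ∑ A ∈ (range m).powerset with gapCount m A = 0, g (m - #A) = ∑ j ∈ range (m + 1), g j := by
  rw [filter_gapCount_eq_zero, sum_image]
  · refine sum_congr rfl fun j hj => ?_
    rw [Nat.card_Ico]
    congr 1
    have := mem_range.1 hj
    omega
  · intro j hj j' hj' h
    have := congrArg card h
    simp only [coe_range, Set.mem_Iio] at hj hj'
    simp only [Nat.card_Ico] at this
    omega

lemma sum_filter_gapCount_eq_one (m : ℕ) (g : ℕ → ℕ) :
    ∑ A ∈ (range m).powerset with gapCount m A = 1, g (m - #A) =
      ∑ c ∈ range m, ∑ a ∈ range c, g (a + 1) := by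
  rw [filter_gapCount_eq_one, sum_image, sum_sigma]
  · refine sum_congr rfl fun c hc => sum_congr rfl fun a ha => ?_
    dsimp only
    have := mem_range.1 hc
    have := mem_range.1 ha
    rw [card_erase_of_mem (mem_Ico.2 ⟨by omega, by omega⟩), Nat.card_Ico]
    congr 1
    omega
  · rintro ⟨c, a⟩ h ⟨c', a'⟩ h' heq
    simp only [coe_sigma, Set.mem_sigma_iff, coe_range, Set.mem_Iio] at h h'
    have hmem (x : ℕ) := Finset.ext_iff.1 heq x
    have ha := hmem a
    have ha' := hmem a'
    have hc := hmem c
    have hc' := hmem c'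
    simp only [mem_erase, mem_Ico] at ha ha' hc hc'
    obtain rfl : a = a' := by omega
    obtain rfl : c = c' := by omega
    rfl

theorem countAvoiding_range_succ_zero (m : ℕ) :
    countAvoiding (range (m + 1)) 0 = ∑ j ∈ range (m + 1), countAvoiding (range j) 0 := by
  rw [countAvoiding_range_succ_eq_sum, ← sum_filter_gapCount_eq_zero, sum_filter]
  simp only [nonpos_iff_eq_zero, Nat.zero_sub]

theorem countAvoiding_range_succ_one (m : ℕ) :
    countAvoiding (range (m + 1)) 1 = ∑ j ∈ range (m + 1), countAvoiding (range j) 1 +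
      ∑ c ∈ range m, ∑ a ∈ range c, countAvoiding (range (a + 1)) 0 := by
  rw [countAvoiding_range_succ_eq_sum, ← sum_filter_gapCount_eq_zero,
    ← sum_filter_gapCount_eq_one (g := fun k => countAvoiding (range k) 0), sum_filter, sum_filter,
    ← sum_add_distrib]
  refine sum_congr rfl fun A _ => ?_
  rcases gapCount m A with _ | _ | k <;> simp

end Recursion

theorem countAvoiding_range_succ_zero_eq_pow (k : ℕ) : countAvoiding (range (k + 1)) 0 = 2 ^ k := by
  induction k with
  | zero => rw [countAvoiding_range_succ_zero, sum_range_one, range_zero, countAvoiding_empty]; rfl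
  | succ k ih =>
    rw [countAvoiding_range_succ_zero, sum_range_succ, ← countAvoiding_range_succ_zero, ih, pow_succ,
      mul_two]

lemma countAvoiding_range_succ_succ_one (m : ℕ) :
    countAvoiding (range (m + 2)) 1 + 1 = 2 * countAvoiding (range (m + 1)) 1 + 2 ^ m := by
  have hgeom : ∑ a ∈ range m, countAvoiding (range (a + 1)) 0 + 1 = 2 ^ m := by
    rw [← countAvoiding_range_succ_zero_eq_pow, countAvoiding_range_succ_zero m, sum_range_succ',
      range_zero, countAvoiding_empty, if_pos rfl]
  have hsucc := countAvoiding_range_succ_one (m + 1)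
  rw [sum_range_succ _ (m + 1),
    sum_range_succ (fun c => ∑ a ∈ range c, countAvoiding (range (a + 1)) 0) m] at hsucc
  have := countAvoiding_range_succ_one m
  change countAvoiding (range (m + 1 + 1)) 1 + 1 = _
  omega

theorem countAvoiding_range_succ_one_eq (k : ℕ) :
    (countAvoiding (range (k + 1)) 1 : ℚ) = (k - 2) * 2 ^ k / 2 + 1 := by
  induction k with
  | zero =>
    rw [countAvoiding_range_succ_one, sum_range_one, sum_range_zero, range_zero, countAvoiding_empty]
    norm_num
  | succ k ih =>
    have h := countAvoiding_range_succ_succ_one k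
    have hq : (countAvoiding (range (k + 2)) 1 : ℚ) + 1 =
        2 * countAvoiding (range (k + 1)) 1 + 2 ^ k := by exact_mod_cast h
    rw [ih] at hq
    push_cast
    linear_combination hq

theorem stmt1 (n : ℕ) (hn : 1 ≤ n) :
    ((Finset.univ.filter (fun π : Equiv.Perm (Fin n) =>
      occ12_3 π = 0 ∧ occ13_2 π = 1)).card : ℚ) =
      ((n : ℚ) - 3) * (2 : ℚ) ^ ((n : ℤ) - 2) + 1 := by
  obtain ⟨k, rfl⟩ := Nat.exists_eq_add_of_le' hn
  have hcount : (Finset.univ.filter (fun π : Equiv.Perm (Fin (k + 1)) =>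
      occ12_3 π = 0 ∧ occ13_2 π = 1)).card = countAvoiding (range (k + 1)) 1 := by
    simp_rw [occ12_3_eq_occ12_3_permList, occ13_2_eq_occ13_2_permList]
    exact card_filter_perm_eq_card_filter_arrangements _ fun l => l.occ12_3 = 0 ∧ l.occ13_2 = 1
  rw [hcount, countAvoiding_range_succ_one_eq,
    show ((k + 1 : ℕ) : ℤ) - 2 = (k : ℤ) - 1 by push_cast; ring, zpow_sub_one₀ two_ne_zero,
    zpow_natCast]
  push_cast
  ring
end

section
/- For every n ≥ 0, the number of permutations of {1,...,n} avoiding the generalized pattern 12-3 and avoiding the generalized pattern 31-2 equals 1 + n(n-1)/2. -/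
/-- rotation of the initial segment [0,m) by s, as a function -/
def fa (n s m i : ℕ) : ℕ :=
  if s < m ∧ m ≤ n then (if i + s < m then i + s else if i < m then i + s - m else i) else i

lemma fa_lt (n s m : ℕ) {i : ℕ} (h : i < n) : fa n s m i < n := by
  unfold fa; split_ifs <;> omega

lemma fa_inv1 (n s m : ℕ) {i : ℕ} (h : i < n) : fa n (m - s) m (fa n s m i) = i := by
  unfold fa; split_ifs <;> omega

lemma fa_inv2 (n s m : ℕ) {i : ℕ} (h : i < n) : fa n s m (fa n (m - s) m i) = i := by
  unfold fa; split_ifs <;> omega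

def Pperm (n s m : ℕ) : Equiv.Perm (Fin n) where
  toFun i := ⟨fa n s m i, fa_lt n s m i.2⟩
  invFun i := ⟨fa n (m - s) m i, fa_lt n (m - s) m i.2⟩
  left_inv i := by ext; exact fa_inv1 n s m i.2
  right_inv i := by ext; exact fa_inv2 n s m i.2

def Qperm (n s m : ℕ) : Equiv.Perm (Fin n) := (Pperm n s m).trans Fin.revPerm

lemma permVal_Q (n s m i : ℕ) (h : i < n) :
    permVal (Qperm n s m) i = n - 1 - fa n s m i := by
  simp only [permVal, dif_pos h, Qperm, Pperm, Equiv.trans_apply, Equiv.coe_fn_mk,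
    Fin.revPerm_apply, Fin.rev]
  omega

lemma avoid12 (n s m : ℕ) : occ12_3 (Qperm n s m) = 0 := by
  unfold occ12_3
  rw [Finset.card_eq_zero, Finset.filter_eq_empty_iff]
  rintro ⟨i, j⟩ hmem
  rw [Finset.mem_product, Finset.mem_range, Finset.mem_range] at hmem
  dsimp only at hmem
  rintro ⟨hij, hc1, hc2⟩
  dsimp only at hij hc1 hc2
  have hi : i < n := by omega
  have hi1 : i + 1 < n := by omega
  simp only [permVal_Q n s m i hi, permVal_Q n s m (i+1) hi1, permVal_Q n s m j hmem.2] at hc1 hc2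
  have b1 := fa_lt n s m hi
  have b2 := fa_lt n s m hi1
  have b3 := fa_lt n s m hmem.2
  unfold fa at hc1 hc2 b1 b2 b3
  split_ifs at hc1 hc2 b1 b2 b3 <;> omega

lemma avoid31 (n s m : ℕ) : occ31_2 (Qperm n s m) = 0 := by
  unfold occ31_2
  rw [Finset.card_eq_zero, Finset.filter_eq_empty_iff]
  rintro ⟨i, j⟩ hmem
  rw [Finset.mem_product, Finset.mem_range, Finset.mem_range] at hmem
  dsimp only at hmem
  rintro ⟨hij, hc1, hc2⟩
  dsimp only at hij hc1 hc2
  have hi : i < n := by omega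
  have hi1 : i + 1 < n := by omega
  simp only [permVal_Q n s m i hi, permVal_Q n s m (i+1) hi1, permVal_Q n s m j hmem.2] at hc1 hc2
  have b1 := fa_lt n s m hi
  have b2 := fa_lt n s m hi1
  have b3 := fa_lt n s m hmem.2
  unfold fa at hc1 hc2 b1 b2 b3
  split_ifs at hc1 hc2 b1 b2 b3 <;> omega

lemma hard {n : ℕ} (hn : 0 < n) (π : Equiv.Perm (Fin n))
    (h1 : occ12_3 π = 0) (h2 : occ31_2 π = 0) :
    ∃ s m, s < m ∧ m ≤ n ∧ (s = 0 → m = n) ∧ π = Qperm n s m := by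
  classical
  set w : ℕ → ℕ := fun i => n - 1 - permVal π i with hwdef
  have hvlt : ∀ i, i < n → permVal π i < n := by
    intro i hi; simp only [permVal, dif_pos hi]; exact (π ⟨i, hi⟩).2
  have hw : ∀ i, i < n → w i < n := by intro i hi; simp only [hwdef]; omega
  have hveq : ∀ i, i < n → permVal π i = n - 1 - w i := by
    intro i hi; have := hvlt i hi; simp only [hwdef]; omega
  have hwinj : ∀ i j, i < n → j < n → w i = w j → i = j := by
    intro i j hi hj hij
    have h1 := hvlt i hi; have h2 := hvlt j hj
    have hv : permVal π i = permVal π j := by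
      have := hveq i hi; have := hveq j hj; simp only [hwdef] at hij; omega
    simp only [permVal, dif_pos hi, dif_pos hj] at hv
    have := π.injective (Fin.val_injective hv)
    exact congrArg Fin.val this
  have hwsurj : ∀ t, t < n → ∃ i, i < n ∧ w i = t := by
    intro t ht
    refine ⟨(π.symm ⟨n - 1 - t, by omega⟩ : Fin n), (π.symm _).2, ?_⟩
    simp only [hwdef, permVal, dif_pos (π.symm ⟨n - 1 - t, by omega⟩ : Fin n).2]
    rw [Fin.eta, Equiv.apply_symm_apply]
    simp; omega
  -- pointwise avoidance
  have key1 : ∀ i j : ℕ, i < n → j < n →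
      ¬(i + 1 < j ∧ permVal π i < permVal π (i+1) ∧ permVal π (i+1) < permVal π j) := by
    intro i j hi hj hc
    unfold occ12_3 at h1
    rw [Finset.card_eq_zero] at h1
    have : ((i, j) : ℕ × ℕ) ∈ (Finset.range n ×ˢ Finset.range n).filter (fun p =>
        p.1 + 1 < p.2 ∧ permVal π p.1 < permVal π (p.1 + 1) ∧
          permVal π (p.1 + 1) < permVal π p.2) := by
      rw [Finset.mem_filter, Finset.mem_product, Finset.mem_range, Finset.mem_range]
      exact ⟨⟨hi, hj⟩, hc⟩
    rw [h1] at this; exact absurd this (Finset.notMem_empty _)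
  have key2 : ∀ i j : ℕ, i < n → j < n →
      ¬(i + 1 < j ∧ permVal π (i+1) < permVal π j ∧ permVal π j < permVal π i) := by
    intro i j hi hj hc
    unfold occ31_2 at h2
    rw [Finset.card_eq_zero] at h2
    have : ((i, j) : ℕ × ℕ) ∈ (Finset.range n ×ˢ Finset.range n).filter (fun p =>
        p.1 + 1 < p.2 ∧ permVal π (p.1 + 1) < permVal π p.2 ∧
          permVal π p.2 < permVal π p.1) := by
      rw [Finset.mem_filter, Finset.mem_product, Finset.mem_range, Finset.mem_range]
      exact ⟨⟨hi, hj⟩, hc⟩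
    rw [h2] at this; exact absurd this (Finset.notMem_empty _)
  have HA : ∀ i j, i + 1 < j → j < n → ¬(w (i+1) < w i ∧ w j < w (i+1)) := by
    intro i j hij hj hc
    have hi : i < n := by omega
    have hi1 : i + 1 < n := by omega
    refine key1 i j hi hj ⟨hij, ?_, ?_⟩
    · rw [hveq i hi, hveq (i+1) hi1]
      have := hw i hi; have := hw (i+1) hi1; omega
    · rw [hveq (i+1) hi1, hveq j hj]
      have := hw j hj; have := hw (i+1) hi1; omega
  have HB : ∀ i j, i + 1 < j → j < n → ¬(w i < w j ∧ w j < w (i+1)) := by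
    intro i j hij hj hc
    have hi : i < n := by omega
    have hi1 : i + 1 < n := by omega
    refine key2 i j hi hj ⟨hij, ?_, ?_⟩
    · rw [hveq (i+1) hi1, hveq j hj]
      have := hw j hj; have := hw (i+1) hi1; omega
    · rw [hveq i hi, hveq j hj]
      have := hw j hj; have := hw i hi; omega
  -- final conversion helper
  have conv : ∀ s m, (∀ i, i < n → w i = fa n s m i) → π = Qperm n s m := by
    intro s m hfa
    ext x
    have hx := x.2
    have h1 : (π x : ℕ) = permVal π x := by simp [permVal, hx]
    have h2 : ((Qperm n s m) x : ℕ) = permVal (Qperm n s m) x := by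
      simp [permVal, hx]
    rw [h1, h2, permVal_Q n s m x hx, hveq x hx, hfa x hx]
  by_cases hdesc : ∃ i, i + 1 < n ∧ w (i+1) < w i
  · -- descent exists
    have hex := hdesc
    set d := Nat.find hex with hddef
    have hd : d + 1 < n ∧ w (d+1) < w d := Nat.find_spec hex
    have hdmin : ∀ i, i < d → ¬(i + 1 < n ∧ w (i+1) < w i) := fun i h => Nat.find_min hex h
    have hdn : d + 1 < n := hd.1
    have asc : ∀ i, i < d → w i < w (i+1) := by
      intro i hi
      have h1 := hdmin i hi
      have hin : i + 1 < n := by omega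
      have h2 : w i ≠ w (i+1) := fun hh => by
        have := hwinj i (i+1) (by omega) hin hh; omega
      push_neg at h1
      have := h1 hin
      omega
    have monod : ∀ j, j ≤ d → ∀ i, i < j → w i < w j := by
      intro j
      induction j with
      | zero => omega
      | succ k ih =>
        intro hk i hi
        have hk' : w k < w (k+1) := asc k (by omega)
        rcases Nat.lt_succ_iff_lt_or_eq.mp hi with h | h
        · exact lt_trans (ih (by omega) i h) hk'
        · subst h; exact hk'
    have prefstep : ∀ i, i < d → w (i+1) = w i + 1 := by
      intro i hi
      have ha : w i < w (i+1) := asc i hi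
      have hin : i + 1 < n := by omega
      by_contra hne
      have hgt : w i + 1 < w (i+1) := by omega
      obtain ⟨p, hp, hwp⟩ := hwsurj (w i + 1) (by have := hw (i+1) hin; omega)
      rcases lt_trichotomy p (i+1) with h | h | h
      · rcases (by omega : p = i ∨ p < i) with h' | h'
        · subst h'; omega
        · have := monod i (by omega) p h'; omega
      · rw [h] at hwp; omega
      · exact HB i p (by omega) hp ⟨by omega, by omega⟩
    have prefval : ∀ i, i ≤ d → w i = w 0 + i := by
      intro i
      induction i with
      | zero => intro _; omega
      | succ k ih =>
        intro hk
        rw [prefstep k (by omega), ih (by omega)]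
        omega
    set s := w 0 with hsdef
    have hwd : w d = s + d := by rw [prefval d (le_refl d)]
    have hwd1 : w (d+1) = 0 := by
      obtain ⟨p, hp, hp0⟩ := hwsurj 0 hn
      rcases lt_trichotomy p (d+1) with h | h | h
      · exfalso
        have hps : w p = s + p := prefval p (by omega)
        have hs0 : s = 0 ∧ p = 0 := by omega
        have hcd : w (d+1) < d := by have := hd.2; omega
        have hww : w (w (d+1)) = w (d+1) := by
          rw [prefval (w (d+1)) (by omega)]; omega
        have := hwinj (w (d+1)) (d+1) (by omega) hdn hww
        omega
      · rw [← h]; exact hp0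
      · exfalso
        have hne : w (d+1) ≠ 0 := fun hh => by
          have := hwinj (d+1) p hdn hp (by omega); omega
        exact HA d p (by omega) hp ⟨hd.2, by omega⟩
    have spos : 0 < s := by
      rcases Nat.eq_zero_or_pos s with h | h
      · exfalso; have := hwinj 0 (d+1) (by omega) hdn (by omega); omega
      · exact h
    set F : ℕ → ℕ := fun i => if i < s + d + 1 then i - d - 1 else i with hFdef
    have hFmono : ∀ p q, p ≤ q → F p ≤ F q := by
      intro p q h; simp only [hFdef]; split_ifs <;> omega
    have suffix : ∀ i, i < n → d + 1 ≤ i → w i = F i := by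
      intro i
      induction i using Nat.strong_induction_on with
      | _ i ih =>
        intro hin hdi
        rcases eq_or_lt_of_le hdi with h | h
        · rw [← h, hwd1]; simp only [hFdef]; rw [if_pos (by omega)]; omega
        · obtain ⟨k, rfl⟩ : ∃ k, i = k + 1 := ⟨i - 1, by omega⟩
          have hk : d + 1 ≤ k := by omega
          have hkn : k < n := by omega
          have hwk : w k = F k := ih k (by omega) hkn hk
          have hwk1n := hw (k+1) hin
          have notmid : ¬(s ≤ w (k+1) ∧ w (k+1) ≤ s + d) := by
            rintro ⟨hs1, hs2⟩
            have hp : w (w (k+1) - s) = w (k+1) := by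
              rw [prefval (w (k+1) - s) (by omega)]; omega
            have := hwinj (w (k+1) - s) (k+1) (by omega) hin hp
            omega
          have hgtFk : F k < w (k+1) := by
            by_contra hle
            have hne : w (k+1) ≠ w k := fun hh => by
              have := hwinj (k+1) k hin hkn hh; omega
            have hlt : w (k+1) < F k := by omega
            by_cases hcs : w (k+1) < s
            · have hb : w (k+1) + d + 1 ≤ k := by
                simp only [hFdef] at hlt; split_ifs at hlt <;> omega
              have hj : w (w (k+1) + d + 1) = w (k+1) := by
                rw [ih (w (k+1) + d + 1) (by omega) (by omega) (by omega)]
                simp only [hFdef]; rw [if_pos (by omega)]; omega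
              have := hwinj (w (k+1) + d + 1) (k+1) (by omega) hin hj
              omega
            · have hcs2 : s + d < w (k+1) := by omega
              have hb : w (k+1) ≤ k := by
                simp only [hFdef] at hlt; split_ifs at hlt <;> omega
              have hb2 : d + 1 ≤ w (k+1) := by omega
              have hj : w (w (k+1)) = w (k+1) := by
                rw [ih (w (k+1)) (by omega) (by omega) hb2]
                simp only [hFdef]; rw [if_neg (by omega)]
              have := hwinj (w (k+1)) (k+1) (by omega) hin hj
              omega
          have between : ∀ t, F k < t → t < w (k+1) → s ≤ t ∧ t ≤ s + d := by
            intro t ht1 ht2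
            by_contra hmid
            obtain ⟨p, hpn, hpt⟩ := hwsurj t (by omega)
            rcases lt_trichotomy p (k+1) with h' | h' | h'
            · by_cases hpd : p ≤ d
              · have := prefval p hpd; omega
              · have hwp : w p = F p := ih p (by omega) (by omega) (by omega)
                have := hFmono p k (by omega)
                omega
            · rw [h'] at hpt; omega
            · exact HB k p (by omega) hpn ⟨by omega, by omega⟩
          have hFk1 : F (k+1) = if k + 1 < s + d + 1 then k - d else k + 1 := by
            simp only [hFdef]; split_ifs <;> omega
          by_cases h1' : k + 1 < s + d + 1
          · have hFkv : F k = k - d - 1 := by simp only [hFdef]; rw [if_pos (by omega)]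
            rw [hFk1, if_pos h1']
            by_contra hne'
            have h2' : k - d < w (k+1) := by omega
            have := between (k - d) (by omega) h2'
            omega
          · by_cases h2' : k + 1 = s + d + 1
            · have hFkv : F k = s - 1 := by
                simp only [hFdef]; rw [if_pos (by omega)]; omega
              rw [hFk1, if_neg h1']
              have hge : s + d + 1 ≤ w (k+1) := by omega
              by_contra hne'
              have := between (s + d + 1) (by omega) (by omega)
              omega
            · have hFkv : F k = k := by simp only [hFdef]; rw [if_neg (by omega)]
              rw [hFk1, if_neg h1']
              have hge : k < w (k+1) := by omega
              by_contra hne'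
              have := between (k + 1) (by omega) (by omega)
              omega
    have hmle : s + d + 1 ≤ n := by have := hw d (by omega); omega
    refine ⟨s, s + d + 1, by omega, hmle, by omega, conv s (s + d + 1) ?_⟩
    intro i hi
    by_cases hid : i ≤ d
    · rw [prefval i hid]; unfold fa
      split_ifs <;> omega
    · rw [suffix i hi (by omega)]; simp only [hFdef]; unfold fa
      split_ifs <;> omega
  · -- no descent
    push_neg at hdesc
    have hnod : ∀ i, i + 1 < n → w i < w (i+1) := by
      intro i hi
      have h1 := hdesc i hi
      have h2 : w i ≠ w (i+1) := fun hh => by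
        have := hwinj i (i+1) (by omega) hi hh; omega
      omega
    have hmono : ∀ j, j < n → ∀ i, i < j → w i < w j := by
      intro j
      induction j with
      | zero => omega
      | succ k ih =>
        intro hk i hi
        have hk' : w k < w (k+1) := hnod k hk
        rcases Nat.lt_succ_iff_lt_or_eq.mp hi with h | h
        · exact lt_trans (ih (by omega) i h) hk'
        · subst h; exact hk'
    have step : ∀ i, i + 1 < n → w (i+1) = w i + 1 := by
      intro i hi
      have ha : w i < w (i+1) := hnod i hi
      by_contra hne
      have hgt : w i + 1 < w (i+1) := by omega
      obtain ⟨p, hp, hwp⟩ := hwsurj (w i + 1) (by have := hw (i+1) hi; omega)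
      rcases lt_trichotomy p (i+1) with h | h | h
      · rcases (by omega : p = i ∨ p < i) with h' | h'
        · subst h'; omega
        · have := hmono i (by omega) p h'; omega
      · rw [h] at hwp; omega
      · exact HB i p (by omega) hp ⟨by omega, by omega⟩
    have w0 : w 0 = 0 := by
      obtain ⟨p, hp, hp0⟩ := hwsurj 0 hn
      rcases Nat.eq_zero_or_pos p with h | h
      · rw [h] at hp0; exact hp0
      · have := hmono p hp 0 h; omega
    have wid : ∀ i, i < n → w i = i := by
      intro i
      induction i with
      | zero => intro _; exact w0
      | succ k ih =>
        intro hk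
        rw [step k hk, ih (by omega)]
    refine ⟨0, n, hn, le_refl n, fun _ => rfl, conv 0 n ?_⟩
    intro i hi
    rw [wid i hi]; unfold fa
    split_ifs <;> omega

lemma eval_Q (n s m i : ℕ) (h : i < n) :
    ((Qperm n s m) ⟨i, h⟩ : ℕ) = n - 1 - fa n s m i := by
  have := permVal_Q n s m i h
  simpa [permVal, h] using this

lemma Q_inj_aux {n s m s' m' : ℕ} (h : Qperm n s m = Qperm n s' m') :
    ∀ i, i < n → fa n s m i = fa n s' m' i := by
  intro i hi
  have hh := congrArg (fun (e : Equiv.Perm (Fin n)) => ((e ⟨i, hi⟩ : Fin n) : ℕ)) h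
  rw [eval_Q n s m i hi, eval_Q n s' m' i hi] at hh
  have b1 := fa_lt n s m hi
  have b2 := fa_lt n s' m' hi
  omega

theorem stmt4 (n : ℕ) :
    (Finset.univ.filter (fun π : Equiv.Perm (Fin n) =>
      occ12_3 π = 0 ∧ occ31_2 π = 0)).card = 1 + n * (n - 1) / 2 := by
  rcases Nat.eq_zero_or_pos n with hn | hn
  · subst hn
    have hall : ∀ π : Equiv.Perm (Fin 0), occ12_3 π = 0 ∧ occ31_2 π = 0 := by
      intro π; constructor <;> simp [occ12_3, occ31_2]
    rw [Finset.filter_true_of_mem (fun π _ => hall π)]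
    simp
  · set T := (Finset.range (n+1)).sigma (fun m => Finset.Ico 1 m) with hT
    set A := T.image (fun q => Qperm n q.2 q.1) with hA
    have hmemT : ∀ q : (_ : ℕ) × ℕ, q ∈ T ↔ q.1 ≤ n ∧ 1 ≤ q.2 ∧ q.2 < q.1 := by
      intro q
      simp [hT, Finset.mem_sigma, Finset.mem_Ico, Nat.lt_succ_iff]
    have hset : Finset.univ.filter (fun π : Equiv.Perm (Fin n) =>
        occ12_3 π = 0 ∧ occ31_2 π = 0) = insert (Qperm n 0 n) A := by
      ext π
      simp only [Finset.mem_filter, Finset.mem_univ, true_and, Finset.mem_insert, hA,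
        Finset.mem_image]
      constructor
      · rintro ⟨h1, h2⟩
        obtain ⟨s, m, hsm, hmn, hs0, rfl⟩ := hard hn π h1 h2
        rcases Nat.eq_zero_or_pos s with h | h
        · subst h; rw [hs0 rfl]; left; rfl
        · right; exact ⟨⟨m, s⟩, (hmemT _).mpr ⟨hmn, h, hsm⟩, rfl⟩
      · rintro (rfl | ⟨q, hq, rfl⟩)
        · exact ⟨avoid12 n 0 n, avoid31 n 0 n⟩
        · exact ⟨avoid12 n _ _, avoid31 n _ _⟩
    rw [hset]
    have hnotin : Qperm n 0 n ∉ A := by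
      rw [hA, Finset.mem_image]
      rintro ⟨q, hq, hQ⟩
      rw [hmemT] at hq
      have := Q_inj_aux hQ 0 hn
      unfold fa at this
      split_ifs at this <;> omega
    rw [Finset.card_insert_of_notMem hnotin]
    have hinj : Set.InjOn (fun q : (_ : ℕ) × ℕ => Qperm n q.2 q.1) T := by
      rintro ⟨m, s⟩ hq ⟨m', s'⟩ hq' hQ
      rw [Finset.mem_coe, hmemT] at hq hq'
      simp only at hq hq' hQ
      have hs : s = s' := by
        have := Q_inj_aux hQ 0 hn
        unfold fa at this; split_ifs at this <;> omega
      subst hs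
      have hm : m = m' := by
        by_contra hne
        rcases lt_or_gt_of_ne hne with h | h
        · have := Q_inj_aux hQ (m' - 1) (by omega)
          unfold fa at this; split_ifs at this <;> omega
        · have := Q_inj_aux hQ (m - 1) (by omega)
          unfold fa at this; split_ifs at this <;> omega
      subst hm; rfl
    rw [hA, Finset.card_image_of_injOn hinj]
    have hcardT : T.card = n * (n - 1) / 2 := by
      rw [hT, Finset.card_sigma]
      have hc : ∀ m ∈ Finset.range (n+1), (Finset.Ico 1 m).card = m - 1 := by
        intro m _; rw [Nat.card_Ico]
      rw [Finset.sum_congr rfl hc]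
      have h2 : ∑ m ∈ Finset.range (n+1), (m - 1) = ∑ i ∈ Finset.range n, i := by
        rw [Finset.sum_range_succ' (fun m => m - 1) n]
        simp
      have h3 := Finset.sum_range_id_mul_two n
      omega
    rw [hcardT]
    omega
end

section
/- For every n ≥ 0, the number of permutations of {1,...,n} avoiding the generalized pattern 12-3 and containing exactly one occurrence of the generalized pattern 31-2 equals n(n-1)(n-2)(3n-5)/24. -/
/-!
Write a permutation of length `n + 2` as its first letter `p` followed by a standardized
permutation `e` of length `n + 1`. An occurrence of 12-3 or of 31-2 either lies in `e` or starts
at the first letter. For 12-3 the latter are the letters of `e` above `e(1)`, provided `p ≤ e(1)`;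
for 31-2 they are the `p - 1 - e(1)` letters strictly between `e(1)` and `p`. So the 12-3-avoiders
of length `n + 1` with first letter `s` (counted from `0`) satisfy simple recurrences: with no
31-2 there are `s + 1` of them for `s < n` and one for `s = n`; with exactly one 31-2 there are
`C(s,2) + C(n,3) - C(n-1-s,3)` for `s < n` and `C(n,2)` for `s = n`. Summing over `s` with the
hockey-stick identity gives `C(n,2) + C(n,3) + n C(n,3) - C(n,4)`.
-/

open Finset

namespace VincularPattern

def liftAbove (p x : ℕ) : ℕ := if p ≤ x then x + 1 else x

lemma liftAbove_lt_liftAbove {p a b : ℕ} : liftAbove p a < liftAbove p b ↔ a < b := by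
  unfold liftAbove; split_ifs <;> omega

lemma lt_liftAbove {p x : ℕ} : p < liftAbove p x ↔ p ≤ x := by
  unfold liftAbove; split_ifs <;> omega

lemma liftAbove_lt {p x : ℕ} : liftAbove p x < p ↔ x < p := by
  unfold liftAbove; split_ifs <;> omega

lemma val_succAbove {n : ℕ} (p : Fin (n + 1)) (i : Fin n) :
    (p.succAbove i : ℕ) = liftAbove p i := by
  unfold liftAbove
  split_ifs with h
  · rw [Fin.succAbove_of_le_castSucc p i (by simpa [Fin.le_def] using h), Fin.val_succ]
  · rw [Fin.succAbove_of_castSucc_lt p i (by simpa [Fin.lt_def] using h), Fin.val_castSucc]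

lemma permVal_lt {n i : ℕ} (π : Equiv.Perm (Fin n)) (h : i < n) : permVal π i < n := by
  simp [permVal, h]

lemma permVal_inv_permVal {n i : ℕ} (π : Equiv.Perm (Fin n)) (h : i < n) :
    permVal π⁻¹ (permVal π i) = i := by
  simp [permVal, h]

lemma card_filter_permVal {n : ℕ} (π : Equiv.Perm (Fin n)) (P : ℕ → Prop) [DecidablePred P] :
    #{j ∈ range n | P (permVal π j)} = #{v ∈ range n | P v} := by
  refine card_nbij' (permVal π) (permVal π⁻¹) ?_ ?_ ?_ ?_
  all_goals intro j hj; simp only [coe_filter, Set.mem_ofPred_eq, mem_range] at hj ⊢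
  · exact ⟨permVal_lt π hj.1, hj.2⟩
  · have h := permVal_inv_permVal π⁻¹ hj.1
    rw [inv_inv] at h
    exact ⟨permVal_lt π⁻¹ hj.1, by rw [h]; exact hj.2⟩
  · exact permVal_inv_permVal π hj.1
  · simpa using permVal_inv_permVal π⁻¹ hj.1

/-- The permutation with first letter `p` whose remaining letters are order-isomorphic to `e`. -/
def cons {n : ℕ} (p : Fin (n + 1)) (e : Equiv.Perm (Fin n)) : Equiv.Perm (Fin (n + 1)) :=
  (finSuccEquiv n).trans (e.optionCongr.trans (finSuccEquiv' p).symm)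

@[simp] lemma cons_zero {n : ℕ} (p : Fin (n + 1)) (e : Equiv.Perm (Fin n)) : cons p e 0 = p := by
  simp [cons]

@[simp] lemma cons_succ {n : ℕ} (p : Fin (n + 1)) (e : Equiv.Perm (Fin n)) (i : Fin n) :
    cons p e i.succ = p.succAbove (e i) := by
  simp [cons]

lemma cons_injective {n : ℕ} :
    Function.Injective fun x : Fin (n + 1) × Equiv.Perm (Fin n) ↦ cons x.1 x.2 := by
  rintro ⟨p, e⟩ ⟨q, f⟩ h
  obtain rfl : p = q := by simpa using congr($h 0)
  refine Prod.ext rfl (Equiv.ext fun i ↦ Fin.succAbove_right_injective (p := p) ?_)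
  simpa using congr($h i.succ)

lemma cons_bijective {n : ℕ} :
    Function.Bijective fun x : Fin (n + 1) × Equiv.Perm (Fin n) ↦ cons x.1 x.2 :=
  (Fintype.bijective_iff_injective_and_card _).mpr
    ⟨cons_injective, by simp [Fintype.card_perm, Nat.factorial_succ]⟩

lemma permVal_cons_zero {n : ℕ} (p : Fin (n + 1)) (e : Equiv.Perm (Fin n)) :
    permVal (cons p e) 0 = p := by
  rw [permVal, dif_pos n.succ_pos]
  exact congrArg Fin.val (cons_zero p e)

lemma permVal_cons_succ {n i : ℕ} (p : Fin (n + 1)) (e : Equiv.Perm (Fin n)) (h : i < n) :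
    permVal (cons p e) (i + 1) = liftAbove p (permVal e i) := by
  have : (⟨i + 1, by omega⟩ : Fin (n + 1)) = (⟨i, h⟩ : Fin n).succ := rfl
  rw [permVal, permVal, dif_pos (by omega), dif_pos h, this, cons_succ, val_succAbove]

section Pattern

variable (R : ℕ → ℕ → ℕ → Prop) [∀ a b c, Decidable (R a b c)]

/-- Occurrences of a vincular pattern `ab-c`; `R` prescribes the relative order of `a`, `b`, `c`. -/
def occPattern {n : ℕ} (π : Equiv.Perm (Fin n)) : ℕ :=
  #{q ∈ range n ×ˢ range n |
    q.1 + 1 < q.2 ∧ R (permVal π q.1) (permVal π (q.1 + 1)) (permVal π q.2)}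

lemma occPattern_eq_zero_of_le_two {n : ℕ} (hn : n ≤ 2) (π : Equiv.Perm (Fin n)) :
    occPattern R π = 0 := by
  refine card_eq_zero.mpr (filter_eq_empty_iff.mpr fun q hq h ↦ ?_)
  simp only [mem_product, mem_range] at hq
  omega

lemma occPattern_cons {n : ℕ} (p : Fin (n + 1)) (e : Equiv.Perm (Fin n))
    (hR : ∀ a b c, R (liftAbove p a) (liftAbove p b) (liftAbove p c) ↔ R a b c) :
    occPattern R (cons p e) = occPattern R e +
      #{j ∈ range n | 1 ≤ j ∧ R p (liftAbove p (permVal e 0)) (liftAbove p (permVal e j))} := by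
  simp only [occPattern, card_filter, sum_product]
  rw [sum_range_succ']
  congr 1
  · refine sum_congr rfl fun i hi ↦ ?_
    rw [sum_range_succ', if_neg (by omega), add_zero]
    refine sum_congr rfl fun j hj ↦ if_congr ?_ rfl rfl
    rw [mem_range] at hi hj
    by_cases hij : i + 1 < j
    · rw [permVal_cons_succ p e (by omega), permVal_cons_succ p e (by omega),
        permVal_cons_succ p e hj, hR]
      exact and_congr_left' (by omega)
    · exact iff_of_false (fun h ↦ hij (by omega)) (fun h ↦ hij h.1)
  · rw [sum_range_succ', if_neg (by omega), add_zero]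
    refine sum_congr rfl fun j hj ↦ if_congr ?_ rfl rfl
    rw [mem_range] at hj
    rw [permVal_cons_zero, permVal_cons_succ p e (by omega), permVal_cons_succ p e hj]
    exact and_congr_left' (by omega)

end Pattern

lemma occ12_3_eq_occPattern {n : ℕ} (π : Equiv.Perm (Fin n)) :
    occ12_3 π = occPattern (fun a b c ↦ a < b ∧ b < c) π := rfl

lemma occ31_2_eq_occPattern {n : ℕ} (π : Equiv.Perm (Fin n)) :
    occ31_2 π = occPattern (fun a b c ↦ b < c ∧ c < a) π := rfl

lemma card_filter_one_le_permVal {n : ℕ} (π : Equiv.Perm (Fin n)) (P : ℕ → Prop)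
    [DecidablePred P] (h₀ : ¬ P (permVal π 0)) :
    #{j ∈ range n | 1 ≤ j ∧ P (permVal π j)} = #{v ∈ range n | P v} := by
  rw [← card_filter_permVal π P]
  refine congrArg card (filter_congr fun j _ ↦ ⟨And.right, fun h ↦ ⟨?_, h⟩⟩)
  rcases j with _ | j
  · exact absurd h h₀
  · omega

lemma occ12_3_cons {n : ℕ} (p : Fin (n + 1)) (e : Equiv.Perm (Fin n)) :
    occ12_3 (cons p e) =
      occ12_3 e + if p ≤ permVal e 0 then n - 1 - permVal e 0 else 0 := by
  simp only [occ12_3_eq_occPattern]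
  rw [occPattern_cons _ p e fun a b c ↦ by simp only [liftAbove_lt_liftAbove]]
  congr 1
  split_ifs with hp
  · have : {v ∈ range n | permVal e 0 < v} = Ioo (permVal e 0) n := by
      ext v; simp only [mem_filter, mem_range, mem_Ioo]; omega
    simp only [lt_liftAbove, liftAbove_lt_liftAbove, hp, true_and]
    rw [card_filter_one_le_permVal e _ (lt_irrefl _), this, Nat.card_Ioo]
    omega
  · refine card_eq_zero.mpr (filter_eq_empty_iff.mpr fun j _ h ↦ hp ?_)
    exact lt_liftAbove.mp h.2.1

lemma occ31_2_cons {n : ℕ} (p : Fin (n + 1)) (e : Equiv.Perm (Fin n)) :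
    occ31_2 (cons p e) = occ31_2 e + (p - 1 - permVal e 0) := by
  simp only [occ31_2_eq_occPattern]
  rw [occPattern_cons _ p e fun a b c ↦ by simp only [liftAbove_lt_liftAbove]]
  simp only [liftAbove_lt_liftAbove, liftAbove_lt]
  have : {v ∈ range n | permVal e 0 < v ∧ v < p} = Ioo (permVal e 0) p := by
    ext v; simp only [mem_filter, mem_range, mem_Ioo]; omega
  rw [card_filter_one_le_permVal e (fun v ↦ permVal e 0 < v ∧ v < p) fun h ↦ lt_irrefl _ h.1,
    this, Nat.card_Ioo]
  omega

lemma occ_cons_iff {n k : ℕ} (p : Fin (n + 2)) (e : Equiv.Perm (Fin (n + 1))) :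
    occ12_3 (cons p e) = 0 ∧ occ31_2 (cons p e) = k ↔
      occ12_3 e = 0 ∧ (p ≤ permVal e 0 → permVal e 0 = n) ∧
        occ31_2 e + (p - 1 - permVal e 0) = k := by
  have := permVal_lt e n.succ_pos
  rw [occ12_3_cons, occ31_2_cons]
  split_ifs <;> omega

def avoiderCount (n k s : ℕ) : ℕ :=
  #{π : Equiv.Perm (Fin n) | occ12_3 π = 0 ∧ occ31_2 π = k ∧ permVal π 0 = s}

lemma avoiderCount_add_two {n k s : ℕ} (hs : s < n + 2) :
    avoiderCount (n + 2) k s = #{e : Equiv.Perm (Fin (n + 1)) | occ12_3 e = 0 ∧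
      (s ≤ permVal e 0 → permVal e 0 = n) ∧ occ31_2 e + (s - 1 - permVal e 0) = k} := by
  symm
  refine card_bij (fun e _ ↦ cons ⟨s, hs⟩ e) (fun e he ↦ ?_) (fun e _ f _ h ↦ ?_) (fun π hπ ↦ ?_)
  · simp only [mem_filter, mem_univ, true_and] at he ⊢
    have h := (occ_cons_iff ⟨s, hs⟩ e).mpr he
    exact ⟨h.1, h.2, permVal_cons_zero _ e⟩
  · exact (Prod.ext_iff.mp (cons_injective (a₁ := (⟨s, hs⟩, e)) (a₂ := (⟨s, hs⟩, f)) h)).2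
  · obtain ⟨⟨p, e⟩, rfl⟩ := cons_bijective.2 π
    simp only [mem_filter, mem_univ, true_and, permVal_cons_zero] at hπ ⊢
    obtain rfl : p = ⟨s, hs⟩ := Fin.ext hπ.2.2
    exact ⟨e, (occ_cons_iff _ e).mp ⟨hπ.1, hπ.2.1⟩, rfl⟩

lemma avoiderCount_zero_add_two {n s : ℕ} (hs : s < n + 2) :
    avoiderCount (n + 2) 0 s = (if 1 ≤ s then avoiderCount (n + 1) 0 (s - 1) else 0) +
      (if s ≤ n then avoiderCount (n + 1) 0 n else 0) := by
  rw [avoiderCount_add_two hs]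
  split_ifs <;> try omega
  all_goals
    simp only [avoiderCount, card_filter, ← sum_add_distrib, add_zero, zero_add]
    refine sum_congr rfl fun e _ ↦ ?_
    have := permVal_lt e n.succ_pos
    split_ifs <;> omega

lemma avoiderCount_one_add_two {n s : ℕ} (hs : s < n + 2) :
    avoiderCount (n + 2) 1 s = (if 1 ≤ s then avoiderCount (n + 1) 1 (s - 1) else 0) +
      (if 2 ≤ s then avoiderCount (n + 1) 0 (s - 2) else 0) +
      (if s ≤ n then avoiderCount (n + 1) 1 n else 0) := by
  rw [avoiderCount_add_two hs]
  split_ifs <;> try omega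
  all_goals
    simp only [avoiderCount, card_filter, ← sum_add_distrib, add_zero, zero_add]
    refine sum_congr rfl fun e _ ↦ ?_
    have := permVal_lt e n.succ_pos
    split_ifs <;> omega

lemma avoiderCount_one_zero_zero : avoiderCount 1 0 0 = 1 := by
  rw [avoiderCount, filter_true_of_mem, card_univ, Fintype.card_perm, Fintype.card_fin]
  · rfl
  intro π _
  simp only [occ12_3_eq_occPattern, occ31_2_eq_occPattern,
    occPattern_eq_zero_of_le_two _ (by norm_num : 1 ≤ 2), true_and]
  have := permVal_lt π one_pos
  omega

lemma avoiderCount_one_one_zero : avoiderCount 1 1 0 = 0 := by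
  refine card_eq_zero.mpr (filter_eq_empty_iff.mpr fun π _ h ↦ ?_)
  rw [occ31_2_eq_occPattern, occPattern_eq_zero_of_le_two _ (by norm_num)] at h
  exact absurd h.2.1 zero_ne_one

lemma avoiderCount_zero_top (n : ℕ) : avoiderCount (n + 1) 0 n = 1 := by
  induction n with
  | zero => exact avoiderCount_one_zero_zero
  | succ m ih =>
    rw [avoiderCount_zero_add_two (by omega), if_pos (show 1 ≤ m + 1 by omega),
      if_neg (show ¬ m + 1 ≤ m by omega), Nat.add_sub_cancel, ih]

lemma avoiderCount_zero_of_lt {n s : ℕ} (hs : s < n) : avoiderCount (n + 1) 0 s = s + 1 := by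
  induction n generalizing s with
  | zero => omega
  | succ m ih =>
    rw [avoiderCount_zero_add_two (by omega), if_pos (show s ≤ m by omega), avoiderCount_zero_top]
    rcases s with _ | s
    · rfl
    · rw [if_pos (show 1 ≤ s + 1 by omega), Nat.add_sub_cancel, ih (by omega)]

lemma avoiderCount_one_top (n : ℕ) : avoiderCount (n + 1) 1 n = n.choose 2 := by
  induction n with
  | zero => exact avoiderCount_one_one_zero
  | succ m ih =>
    have h : (m + 1).choose 2 = m.choose 1 + m.choose 2 := Nat.choose_succ_succ' m 1
    rw [avoiderCount_one_add_two (by omega), if_pos (show 1 ≤ m + 1 by omega),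
      if_neg (show ¬ m + 1 ≤ m by omega), Nat.add_sub_cancel, ih, h, Nat.choose_one_right]
    rcases m with _ | m
    · rfl
    · rw [if_pos (show 2 ≤ m + 1 + 1 by omega), show m + 1 + 1 - 2 = m by omega,
        avoiderCount_zero_of_lt (by omega)]
      omega

lemma avoiderCount_one_of_lt {n s : ℕ} (hs : s < n) :
    avoiderCount (n + 1) 1 s + (n - 1 - s).choose 3 = s.choose 2 + n.choose 3 := by
  induction n generalizing s with
  | zero => omega
  | succ m ih =>
    have h₃ : (m + 1).choose 3 = m.choose 2 + m.choose 3 := Nat.choose_succ_succ' m 2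
    rw [avoiderCount_one_add_two (by omega), if_pos (show s ≤ m by omega), avoiderCount_one_top, h₃]
    rcases s with _ | s
    · rw [if_neg (show ¬ 1 ≤ 0 by omega), if_neg (show ¬ 2 ≤ 0 by omega),
        show m + 1 - 1 - 0 = m by omega, Nat.choose_zero_succ]
      omega
    · have h₂ : (s + 1).choose 2 = s.choose 1 + s.choose 2 := Nat.choose_succ_succ' s 1
      have ih := ih (s := s) (by omega)
      rw [if_pos (show 1 ≤ s + 1 by omega), Nat.add_sub_cancel,
        show m + 1 - 1 - (s + 1) = m - 1 - s by omega, h₂, Nat.choose_one_right]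
      rcases s with _ | s
      · rw [if_neg (show ¬ 2 ≤ 0 + 1 by omega)]
        omega
      · rw [if_pos (show 2 ≤ s + 1 + 1 by omega), show s + 1 + 1 - 2 = s by omega,
          avoiderCount_zero_of_lt (by omega)]
        omega

lemma card_avoiding_eq_sum_avoiderCount (n k : ℕ) :
    #{π : Equiv.Perm (Fin (n + 1)) | occ12_3 π = 0 ∧ occ31_2 π = k} =
      ∑ s ∈ range (n + 1), avoiderCount (n + 1) k s := by
  rw [card_eq_sum_card_fiberwise (f := fun π ↦ permVal π 0) (t := range (n + 1))
    fun π _ ↦ mem_range.mpr (permVal_lt π n.succ_pos)]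
  refine sum_congr rfl fun s _ ↦ ?_
  rw [avoiderCount, filter_filter]
  simp only [and_assoc]

lemma sum_range_choose_eq_choose_succ (r m : ℕ) : ∑ j ∈ range m, j.choose r = m.choose (r + 1) := by
  induction m with
  | zero => simp
  | succ m ih => rw [sum_range_succ, ih, Nat.choose_succ_succ' m r, add_comm]

lemma sum_avoiderCount_one (n : ℕ) :
    ∑ s ∈ range (n + 1), avoiderCount (n + 1) 1 s + n.choose 4 =
      n.choose 2 + n.choose 3 + n * n.choose 3 := by
  have hlow : ∑ s ∈ range n, (avoiderCount (n + 1) 1 s + (n - 1 - s).choose 3) =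
      ∑ s ∈ range n, (s.choose 2 + n.choose 3) :=
    sum_congr rfl fun s hs ↦ avoiderCount_one_of_lt (mem_range.mp hs)
  have h₂ : ∑ s ∈ range n, s.choose 2 = n.choose 3 := sum_range_choose_eq_choose_succ 2 n
  have h₃ : ∑ s ∈ range n, (n - 1 - s).choose 3 = n.choose 4 := by
    rw [sum_range_reflect (fun j ↦ j.choose 3) n]
    exact sum_range_choose_eq_choose_succ 3 n
  rw [sum_add_distrib, sum_add_distrib, h₂, h₃, sum_const, card_range, smul_eq_mul] at hlow
  rw [sum_range_succ, avoiderCount_one_top]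
  omega

lemma cast_choose_three {K : Type*} [Field K] [CharZero K] (n : ℕ) :
    (n.choose 3 : K) = n * (n - 1) * (n - 2) / 6 := by
  induction n with
  | zero => simp
  | succ n ih =>
    rw [Nat.choose_succ_succ' n 2]
    push_cast
    rw [ih, Nat.cast_choose_two]
    ring

lemma cast_choose_four {K : Type*} [Field K] [CharZero K] (n : ℕ) :
    (n.choose 4 : K) = n * (n - 1) * (n - 2) * (n - 3) / 24 := by
  induction n with
  | zero => simp
  | succ n ih =>
    rw [Nat.choose_succ_succ' n 3]
    push_cast
    rw [ih, cast_choose_three]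
    ring

end VincularPattern

open VincularPattern

theorem stmt5 (n : ℕ) :
    ((Finset.univ.filter (fun π : Equiv.Perm (Fin n) =>
      occ12_3 π = 0 ∧ occ31_2 π = 1)).card : ℚ) =
      (n : ℚ) * ((n : ℚ) - 1) * ((n : ℚ) - 2) * (3 * (n : ℚ) - 5) / 24 := by
  rcases n with _ | n
  · rw [filter_false_of_mem fun π _ h ↦ ?_]
    · simp
    rw [occ31_2_eq_occPattern, occPattern_eq_zero_of_le_two _ (by norm_num)] at h
    exact zero_ne_one h.2
  · have h : (∑ s ∈ range (n + 1), avoiderCount (n + 1) 1 s : ℚ) + (n.choose 4 : ℕ) =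
        (n.choose 2 : ℕ) + (n.choose 3 : ℕ) + n * (n.choose 3 : ℕ) := by
      exact_mod_cast sum_avoiderCount_one n
    rw [Nat.cast_choose_two, cast_choose_three, cast_choose_four] at h
    rw [card_avoiding_eq_sum_avoiderCount]
    push_cast
    linear_combination h
end

section
/- For every n ≥ 2, the number of permutations of {1,...,n} avoiding both generalized patterns 12-3 and 32-1 equals 2n - 2. -/
namespace Stmt7Aux

/-- The explicit extremal permutation: head `k`, then alternately the largest and
smallest remaining values (0-indexed values). -/
def aval (n k i : ℕ) : ℕ :=
  if i = 0 then k
  else if i % 2 = 1 then (if k + i / 2 + 1 < n then n - 1 - i / 2 else n - 2 - i / 2)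
  else (if i / 2 - 1 < k then i / 2 - 1 else i / 2)

lemma aval_lt {n k i : ℕ} (hk : k + 2 ≤ n) (hi : i < n) : aval n k i < n := by
  unfold aval; split_ifs <;> omega

lemma aval_inj {n k i j : ℕ} (hk : k + 2 ≤ n) (hi : i < n) (hj : j < n)
    (h : aval n k i = aval n k j) : i = j := by
  unfold aval at h; split_ifs at h <;> omega

lemma aval_zero {n k : ℕ} : aval n k 0 = k := by
  unfold aval; norm_num

lemma aval_one {n k : ℕ} (hk : k + 2 ≤ n) : aval n k 1 = n - 1 := by
  have h : aval n k 1 = if k + 1 / 2 + 1 < n then n - 1 - 1 / 2 else n - 2 - 1 / 2 := by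
    unfold aval; norm_num
  rw [h]; split_ifs <;> omega

lemma aval_M {n k i j : ℕ} (hk : k + 2 ≤ n) (hi : i % 2 = 1) (hij : i < j) (hj : j < n) :
    aval n k j < aval n k i := by
  unfold aval; split_ifs <;> omega

lemma aval_m {n k i j : ℕ} (hk : k + 2 ≤ n) (hi0 : i ≠ 0) (hi : i % 2 = 0)
    (hij : i < j) (hj : j < n) : aval n k i < aval n k j := by
  unfold aval; split_ifs <;> omega

lemma aval_fact {n k i j : ℕ} (hk : k + 2 ≤ n) (hij : i + 1 < j) (hj : j < n) :
    ¬(aval n k i < aval n k (i + 1) ∧ aval n k (i + 1) < aval n k j) ∧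
    ¬(aval n k j < aval n k (i + 1) ∧ aval n k (i + 1) < aval n k i) := by
  rcases Nat.even_or_odd (i + 1) with he | ho
  · rw [Nat.even_iff] at he
    have h1 : aval n k (i + 1) < aval n k i :=
      aval_M hk (by omega) (by omega) (by omega)
    have h2 : aval n k (i + 1) < aval n k j :=
      aval_m hk (by omega) he (by omega) hj
    exact ⟨fun h => by omega, fun h => by omega⟩
  · rw [Nat.odd_iff] at ho
    have h1 : aval n k j < aval n k (i + 1) := aval_M hk ho (by omega) hj
    have h2 : aval n k i < aval n k (i + 1) := by
      rcases Nat.eq_zero_or_pos i with h0 | h0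
      · subst h0
        have ho1 := aval_one (n := n) (k := k) hk
        have ho0 := aval_zero (n := n) (k := k)
        show aval n k 0 < aval n k 1
        omega
      · exact aval_m hk (by omega) (by omega) (by omega) (by omega)
    exact ⟨fun h => by omega, fun h => by omega⟩

def apermFun (n k : ℕ) (hk : k + 2 ≤ n) : Fin n → Fin n :=
  fun i => ⟨aval n k i.1, aval_lt hk i.2⟩

noncomputable def aperm (n k : ℕ) (hk : k + 2 ≤ n) : Equiv.Perm (Fin n) :=
  Equiv.ofBijective (apermFun n k hk)
    (Finite.injective_iff_bijective.mp (fun i j h => by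
      apply Fin.ext
      exact aval_inj hk i.2 j.2 (congrArg Fin.val h)))

lemma aperm_apply {n k : ℕ} (hk : k + 2 ≤ n) (i : Fin n) :
    aperm n k hk i = ⟨aval n k i.1, aval_lt hk i.2⟩ := rfl

lemma permVal_aperm {n k : ℕ} (hk : k + 2 ≤ n) {i : ℕ} (hi : i < n) :
    permVal (aperm n k hk) i = aval n k i := by
  rw [permVal, dif_pos hi, aperm_apply]

lemma permVal_lt {n : ℕ} (π : Equiv.Perm (Fin n)) {i : ℕ} (hi : i < n) :
    permVal π i < n := by
  rw [permVal, dif_pos hi]; exact (π ⟨i, hi⟩).2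

lemma permVal_inj {n : ℕ} (π : Equiv.Perm (Fin n)) {i j : ℕ} (hi : i < n) (hj : j < n)
    (h : permVal π i = permVal π j) : i = j := by
  rw [permVal, dif_pos hi, permVal, dif_pos hj] at h
  have := π.injective (Fin.ext h)
  exact congrArg Fin.val this

lemma occ12_3_aperm {n k : ℕ} (hk : k + 2 ≤ n) : occ12_3 (aperm n k hk) = 0 := by
  rw [occ12_3, Finset.card_eq_zero, Finset.filter_eq_empty_iff]
  rintro ⟨i, j⟩ hm
  simp only [Finset.mem_product, Finset.mem_range] at hm
  rintro ⟨h1, h2, h3⟩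
  rw [permVal_aperm hk (by omega), permVal_aperm hk (by omega)] at h2
  rw [permVal_aperm hk (by omega), permVal_aperm hk hm.2] at h3
  exact (aval_fact hk h1 hm.2).1 ⟨h2, h3⟩

lemma occ32_1_aperm {n k : ℕ} (hk : k + 2 ≤ n) : occ32_1 (aperm n k hk) = 0 := by
  rw [occ32_1, Finset.card_eq_zero, Finset.filter_eq_empty_iff]
  rintro ⟨i, j⟩ hm
  simp only [Finset.mem_product, Finset.mem_range] at hm
  rintro ⟨h1, h2, h3⟩
  rw [permVal_aperm hk hm.2, permVal_aperm hk (by omega)] at h2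
  rw [permVal_aperm hk (by omega), permVal_aperm hk (by omega)] at h3
  exact (aval_fact hk h1 hm.2).2 ⟨h2, h3⟩

/-- The complement (value-reversal) of a permutation. -/
def cperm {n : ℕ} (π : Equiv.Perm (Fin n)) : Equiv.Perm (Fin n) :=
  π.trans Fin.revPerm

lemma permVal_cperm {n : ℕ} (π : Equiv.Perm (Fin n)) {i : ℕ} (hi : i < n) :
    permVal (cperm π) i = n - 1 - permVal π i := by
  rw [permVal, permVal, dif_pos hi, dif_pos hi]
  show ((π ⟨i, hi⟩).rev : ℕ) = n - 1 - (π ⟨i, hi⟩ : ℕ)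
  rw [Fin.val_rev]
  omega

lemma cperm_cperm {n : ℕ} (π : Equiv.Perm (Fin n)) : cperm (cperm π) = π := by
  apply Equiv.ext
  intro a
  simp [cperm]

lemma permVal_cperm_lt {n : ℕ} (π : Equiv.Perm (Fin n)) {a b : ℕ} (ha : a < n) (hb : b < n) :
    (permVal (cperm π) a < permVal (cperm π) b ↔ permVal π b < permVal π a) := by
  rw [permVal_cperm π ha, permVal_cperm π hb]
  have h1 := permVal_lt π ha
  have h2 := permVal_lt π hb
  omega

lemma occ12_3_cperm {n : ℕ} (π : Equiv.Perm (Fin n)) : occ12_3 (cperm π) = occ32_1 π := by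
  rw [occ12_3, occ32_1]
  congr 1
  apply Finset.filter_congr
  rintro ⟨i, j⟩ hm
  simp only [Finset.mem_product, Finset.mem_range] at hm
  simp only
  constructor
  · rintro ⟨h1, h2, h3⟩
    refine ⟨h1, ?_, ?_⟩
    · exact (permVal_cperm_lt π (by omega) hm.2).mp h3
    · exact (permVal_cperm_lt π (by omega) (by omega)).mp h2
  · rintro ⟨h1, h2, h3⟩
    refine ⟨h1, ?_, ?_⟩
    · exact (permVal_cperm_lt π (by omega) (by omega)).mpr h3
    · exact (permVal_cperm_lt π (by omega) hm.2).mpr h2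

lemma occ32_1_cperm {n : ℕ} (π : Equiv.Perm (Fin n)) : occ32_1 (cperm π) = occ12_3 π := by
  conv_rhs => rw [← cperm_cperm π]
  rw [occ12_3_cperm]

/-- Avoiding both 12-3 and 32-1. -/
def Av {n : ℕ} (π : Equiv.Perm (Fin n)) : Prop := occ12_3 π = 0 ∧ occ32_1 π = 0

lemma Av_cperm {n : ℕ} {π : Equiv.Perm (Fin n)} (h : Av π) : Av (cperm π) :=
  ⟨(occ12_3_cperm π).trans h.2, (occ32_1_cperm π).trans h.1⟩

lemma avD {n : ℕ} {π : Equiv.Perm (Fin n)} (h : Av π) (i j : ℕ)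
    (hij : i + 1 < j) (hj : j < n) :
    (permVal π i < permVal π (i + 1) → permVal π j < permVal π (i + 1)) ∧
    (permVal π (i + 1) < permVal π i → permVal π (i + 1) < permVal π j) := by
  obtain ⟨h1, h2⟩ := h
  rw [occ12_3, Finset.card_eq_zero, Finset.filter_eq_empty_iff] at h1
  rw [occ32_1, Finset.card_eq_zero, Finset.filter_eq_empty_iff] at h2
  have hmem : (i, j) ∈ Finset.range n ×ˢ Finset.range n := by
    simp only [Finset.mem_product, Finset.mem_range]
    omega
  have c1 := h1 hmem
  have c2 := h2 hmem
  simp only [not_and] at c1 c2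
  have hne : permVal π (i + 1) ≠ permVal π j := fun he => by
    have := permVal_inj π (by omega) hj he
    omega
  constructor
  · intro ha
    have := c1 hij ha
    omega
  · intro hd
    have h5 : ¬ (permVal π j < permVal π (i + 1)) := fun hc => (c2 hij hc) hd
    omega

lemma avQ {n : ℕ} {π : Equiv.Perm (Fin n)} (h : Av π)
    (hasc : permVal π 0 < permVal π 1) :
    ∀ m, 1 ≤ m → m < n →
      (m % 2 = 1 → ∀ j, m < j → j < n → permVal π j < permVal π m) ∧
      (m % 2 = 0 → ∀ j, m < j → j < n → permVal π m < permVal π j) := by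
  intro m
  induction m with
  | zero => intro h1; omega
  | succ m ih =>
    intro _ hlt
    rcases Nat.eq_zero_or_pos m with hm | hm
    · subst hm
      constructor
      · intro _ j hj1 hj2
        exact (avD h 0 j (by omega) hj2).1 hasc
      · intro habs; omega
    · obtain ⟨ih1, ih2⟩ := ih (by omega) (by omega)
      constructor
      · intro hp j hj1 hj2
        have hd : permVal π m < permVal π (m + 1) := ih2 (by omega) (m + 1) (by omega) hlt
        exact (avD h m j (by omega) hj2).1 hd
      · intro hp j hj1 hj2
        have hd : permVal π (m + 1) < permVal π m := ih1 (by omega) (m + 1) (by omega) hlt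
        exact (avD h m j (by omega) hj2).2 hd

lemma unique_asc {n : ℕ} {π σ : Equiv.Perm (Fin n)} (hπ : Av π) (hσ : Av σ)
    (h0 : permVal π 0 = permVal σ 0)
    (hπa : permVal π 0 < permVal π 1) (hσa : permVal σ 0 < permVal σ 1) : π = σ := by
  have key : ∀ m, m < n → permVal π m = permVal σ m := by
    intro m
    induction m using Nat.strong_induction_on with
    | _ m ih =>
      intro hm
      rcases Nat.eq_zero_or_pos m with h | h
      · subst h; exact h0
      · set x : Fin n := π ⟨m, hm⟩ with hx
        set iF : Fin n := σ.symm x with hiF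
        have hσi : σ iF = x := σ.apply_symm_apply x
        have hpx : permVal π m = x.1 := by rw [permVal, dif_pos hm]
        have hσi' : permVal σ iF.1 = x.1 := by
          rw [permVal, dif_pos iF.2]
          exact congrArg Fin.val hσi
        set y : Fin n := σ ⟨m, hm⟩ with hy
        set jF : Fin n := π.symm y with hjF
        have hπj : π jF = y := π.apply_symm_apply y
        have hsy : permVal σ m = y.1 := by rw [permVal, dif_pos hm]
        have hπj' : permVal π jF.1 = y.1 := by
          rw [permVal, dif_pos jF.2]
          exact congrArg Fin.val hπj
        rcases lt_trichotomy iF.1 m with hc | hc | hc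
        · exfalso
          have he := ih iF.1 hc iF.2
          rw [hσi'] at he
          have := permVal_inj π iF.2 hm (he.trans hpx.symm)
          omega
        · rw [hpx, ← hσi', hc]
        · rcases lt_trichotomy jF.1 m with hd | hd | hd
          · exfalso
            have he := ih jF.1 hd jF.2
            rw [hπj'] at he
            have := permVal_inj σ jF.2 hm (he.symm.trans hsy.symm)
            omega
          · rw [hsy, ← hπj', hd]
          · exfalso
            have Qσ := avQ hσ hσa m (by omega) hm
            have Qπ := avQ hπ hπa m (by omega) hm
            rcases Nat.even_or_odd m with hme | hmo
            · rw [Nat.even_iff] at hme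
              have q1 : permVal σ m < permVal σ iF.1 := Qσ.2 hme iF.1 hc iF.2
              have q2 : permVal π m < permVal π jF.1 := Qπ.2 hme jF.1 hd jF.2
              rw [hσi'] at q1
              rw [hπj'] at q2
              omega
            · rw [Nat.odd_iff] at hmo
              have q1 : permVal σ iF.1 < permVal σ m := Qσ.1 hmo iF.1 hc iF.2
              have q2 : permVal π jF.1 < permVal π m := Qπ.1 hmo jF.1 hd jF.2
              rw [hσi'] at q1
              rw [hπj'] at q2
              omega
  apply Equiv.ext
  intro a
  have := key a.1 a.2
  rw [permVal, dif_pos a.2, permVal, dif_pos a.2] at this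
  exact π.injective.eq_iff.mpr rfl ▸ Fin.ext (by simpa using this)

lemma unique_desc {n : ℕ} (hn : 2 ≤ n) {π σ : Equiv.Perm (Fin n)} (hπ : Av π) (hσ : Av σ)
    (h0 : permVal π 0 = permVal σ 0)
    (hπd : permVal π 1 < permVal π 0) (hσd : permVal σ 1 < permVal σ 0) : π = σ := by
  have h0n : (0 : ℕ) < n := by omega
  have h1n : (1 : ℕ) < n := by omega
  have hb1 := permVal_lt π h0n
  have hb2 := permVal_lt π h1n
  have hb3 := permVal_lt σ h0n
  have hb4 := permVal_lt σ h1n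
  have hc : cperm π = cperm σ := by
    apply unique_asc (Av_cperm hπ) (Av_cperm hσ)
    · rw [permVal_cperm π h0n, permVal_cperm σ h0n, h0]
    · rw [permVal_cperm π h0n, permVal_cperm π h1n]; omega
    · rw [permVal_cperm σ h0n, permVal_cperm σ h1n]; omega
  have := congrArg cperm hc
  rwa [cperm_cperm, cperm_cperm] at this

end Stmt7Aux

open Stmt7Aux

theorem stmt7 (n : ℕ) (hn : 2 ≤ n) :
    (Finset.univ.filter (fun π : Equiv.Perm (Fin n) =>
      occ12_3 π = 0 ∧ occ32_1 π = 0)).card = 2 * n - 2 := by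
  classical
  have h0n : (0 : ℕ) < n := by omega
  have h1n : (1 : ℕ) < n := by omega
  set T : Finset (Fin n × Bool) :=
    Finset.univ \ {(⟨n - 1, by omega⟩, true), (⟨0, h0n⟩, false)} with hT
  have hTcard : T.card = 2 * n - 2 := by
    rw [hT, Finset.card_sdiff_of_subset (Finset.subset_univ _)]
    have hpair : ({(⟨n - 1, by omega⟩, true), (⟨0, h0n⟩, false)} :
        Finset (Fin n × Bool)).card = 2 := by
      rw [Finset.card_insert_of_notMem (by simp), Finset.card_singleton]
    rw [hpair, Finset.card_univ]
    simp only [Fintype.card_prod, Fintype.card_fin, Fintype.card_bool]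
    omega
  rw [← hTcard]
  have hpv0 : ∀ (π : Equiv.Perm (Fin n)), permVal π 0 = (π ⟨0, h0n⟩).1 := by
    intro π; rw [permVal, dif_pos h0n]
  have hpv1 : ∀ (π : Equiv.Perm (Fin n)), permVal π 1 = (π ⟨1, h1n⟩).1 := by
    intro π; rw [permVal, dif_pos h1n]
  have hne01 : ∀ (π : Equiv.Perm (Fin n)), π ⟨0, h0n⟩ ≠ π ⟨1, h1n⟩ := by
    intro π hc
    have := congrArg Fin.val (π.injective hc)
    simp at this
  apply Finset.card_bij (fun π _ => (π ⟨0, h0n⟩, decide (π ⟨0, h0n⟩ < π ⟨1, h1n⟩)))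
  · -- maps into T
    intro π hπ
    simp only [hT, Finset.mem_sdiff, Finset.mem_univ, true_and, Finset.mem_insert,
      Finset.mem_singleton, Prod.mk.injEq, not_or, not_and]
    constructor
    · intro hfe
      have hlt : ¬ (π ⟨0, h0n⟩ < π ⟨1, h1n⟩) := by
        intro hlt
        have h1 : (π ⟨0, h0n⟩).1 < (π ⟨1, h1n⟩).1 := hlt
        have h2 : (π ⟨1, h1n⟩).1 < n := (π ⟨1, h1n⟩).2
        have h3 : (π ⟨0, h0n⟩).1 = n - 1 := congrArg Fin.val hfe
        omega
      simp [hlt]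
    · intro hfe
      have hlt : π ⟨0, h0n⟩ < π ⟨1, h1n⟩ := by
        have h3 : (π ⟨0, h0n⟩).1 = 0 := congrArg Fin.val hfe
        rcases lt_trichotomy (π ⟨0, h0n⟩) (π ⟨1, h1n⟩) with h | h | h
        · exact h
        · exact absurd h (hne01 π)
        · exact absurd (show (π ⟨1, h1n⟩).1 < (π ⟨0, h0n⟩).1 from h) (by omega)
      simp [hlt]
  · -- injective
    intro π hπ σ hσ heq
    simp only [Finset.mem_filter, Finset.mem_univ, true_and] at hπ hσ
    have hπA : Stmt7Aux.Av π := hπ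
    have hσA : Stmt7Aux.Av σ := hσ
    have he1 : π ⟨0, h0n⟩ = σ ⟨0, h0n⟩ := congrArg Prod.fst heq
    have he2 : decide (π ⟨0, h0n⟩ < π ⟨1, h1n⟩) = decide (σ ⟨0, h0n⟩ < σ ⟨1, h1n⟩) :=
      congrArg Prod.snd heq
    have he2' : (π ⟨0, h0n⟩ < π ⟨1, h1n⟩) ↔ (σ ⟨0, h0n⟩ < σ ⟨1, h1n⟩) := by
      constructor
      · intro h
        exact of_decide_eq_true (he2 ▸ decide_eq_true h)
      · intro h
        by_contra hc
        rw [decide_eq_true h, decide_eq_false hc] at he2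
        exact Bool.false_ne_true he2
    have h0eq : permVal π 0 = permVal σ 0 := by
      rw [hpv0 π, hpv0 σ, he1]
    by_cases hlt : π ⟨0, h0n⟩ < π ⟨1, h1n⟩
    · have hσlt := he2'.mp hlt
      exact unique_asc hπA hσA h0eq
        (by rw [hpv0 π, hpv1 π]; exact hlt)
        (by rw [hpv0 σ, hpv1 σ]; exact hσlt)
    · have hπd : π ⟨1, h1n⟩ < π ⟨0, h0n⟩ := by
        rcases lt_trichotomy (π ⟨0, h0n⟩) (π ⟨1, h1n⟩) with h | h | h
        · exact absurd h hlt
        · exact absurd h (hne01 π)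
        · exact h
      have hσd : σ ⟨1, h1n⟩ < σ ⟨0, h0n⟩ := by
        have hσlt : ¬ (σ ⟨0, h0n⟩ < σ ⟨1, h1n⟩) := fun h => hlt (he2'.mpr h)
        rcases lt_trichotomy (σ ⟨0, h0n⟩) (σ ⟨1, h1n⟩) with h | h | h
        · exact absurd h hσlt
        · exact absurd h (hne01 σ)
        · exact h
      exact unique_desc hn hπA hσA h0eq
        (by rw [hpv0 π, hpv1 π]; exact hπd)
        (by rw [hpv0 σ, hpv1 σ]; exact hσd)
  · -- surjective
    rintro ⟨k, b⟩ hb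
    simp only [hT, Finset.mem_sdiff, Finset.mem_univ, true_and, Finset.mem_insert,
      Finset.mem_singleton, Prod.mk.injEq, not_or, not_and] at hb
    cases b with
    | true =>
      have hk : k.1 + 2 ≤ n := by
        have hne : k ≠ ⟨n - 1, by omega⟩ := fun hc => (hb.1 hc) rfl
        have h2 : k.1 ≠ n - 1 := fun hc => hne (Fin.ext hc)
        have := k.2
        omega
      refine ⟨aperm n k.1 hk, ?_, ?_⟩
      · simp only [Finset.mem_filter, Finset.mem_univ, true_and]
        exact ⟨occ12_3_aperm hk, occ32_1_aperm hk⟩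
      · have hv0 : (aperm n k.1 hk ⟨0, h0n⟩).1 = k.1 := by
          rw [← hpv0 (aperm n k.1 hk), permVal_aperm hk h0n]
          exact aval_zero
        have hv1 : (aperm n k.1 hk ⟨1, h1n⟩).1 = n - 1 := by
          rw [← hpv1 (aperm n k.1 hk), permVal_aperm hk h1n]
          exact aval_one hk
        have hlt : aperm n k.1 hk ⟨0, h0n⟩ < aperm n k.1 hk ⟨1, h1n⟩ := by
          show (aperm n k.1 hk ⟨0, h0n⟩).1 < (aperm n k.1 hk ⟨1, h1n⟩).1
          rw [hv0, hv1]; omega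
        rw [Prod.mk.injEq]
        exact ⟨Fin.ext hv0, decide_eq_true hlt⟩
    | false =>
      have hk1 : 1 ≤ k.1 := by
        have hne : k ≠ ⟨0, h0n⟩ := fun hc => (hb.2 hc) rfl
        have h2 : k.1 ≠ 0 := fun hc => hne (Fin.ext hc)
        omega
      have hk : (n - 1 - k.1) + 2 ≤ n := by
        have := k.2
        omega
      refine ⟨cperm (aperm n (n - 1 - k.1) hk), ?_, ?_⟩
      · simp only [Finset.mem_filter, Finset.mem_univ, true_and]
        exact Av_cperm ⟨occ12_3_aperm hk, occ32_1_aperm hk⟩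
      · have hbase0 : permVal (aperm n (n - 1 - k.1) hk) 0 = n - 1 - k.1 := by
          rw [permVal_aperm hk h0n]; exact aval_zero
        have hbase1 : permVal (aperm n (n - 1 - k.1) hk) 1 = n - 1 := by
          rw [permVal_aperm hk h1n]; exact aval_one hk
        have hv0 : permVal (cperm (aperm n (n - 1 - k.1) hk)) 0 = k.1 := by
          rw [permVal_cperm _ h0n, hbase0]
          have := k.2
          omega
        have hv1 : permVal (cperm (aperm n (n - 1 - k.1) hk)) 1 = 0 := by
          rw [permVal_cperm _ h1n, hbase1]
          omega
        rw [permVal, dif_pos h0n] at hv0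
        rw [permVal, dif_pos h1n] at hv1
        have hnlt : ¬ (cperm (aperm n (n - 1 - k.1) hk) ⟨0, h0n⟩ <
            cperm (aperm n (n - 1 - k.1) hk) ⟨1, h1n⟩) := by
          intro hc
          have hcv : (cperm (aperm n (n - 1 - k.1) hk) ⟨0, h0n⟩).1 <
              (cperm (aperm n (n - 1 - k.1) hk) ⟨1, h1n⟩).1 := hc
          omega
        rw [Prod.mk.injEq]
        exact ⟨Fin.ext hv0, decide_eq_false hnlt⟩
end
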